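/- arXiv:2111.15071 — 4 statements merged into one kernel-verified Lean document; each statement's English description precedes it below -/
import Mathlib

section
/- Let g_1, …, g_K be independent square-integrable random vectors in ℝ^N such that for each k the N entries of g_k are i.i.d. with mean μ_k and variance ν_k > 0, and let ρ_1, …, ρ_K be real weights. Set g = Σ_k ρ_k g_k, ν̃ = Σ_k ρ_k² ν_k, and μ̃_sq = Σ_k ρ_k² μ_k². Let d be a random vector in ℝ^M with zero mean and covariance κ(ν̃ + μ̃_sq) I_M (κ > 0), uncorrelated with g, and let the observation be q̃ = A g + d, where A ∈ ℝ^{M×N} satisfies A Aᵀ = R I_M with N = R·M, R > 0. Then the linear MMSE estimate ĝ of g from q̃ satisfies E[‖g − ĝ‖²] = N ν̃ ( 1 − ν̃ / ( R ν̃ + κ(ν̃ + μ̃_sq) ) ). -/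
open MeasureTheory ProbabilityTheory Matrix

private lemma l2_mul_integrable {Ω : Type*} [MeasurableSpace Ω] {μ : Measure Ω}
    {f g : Ω → ℝ} (hf : MemLp f 2 μ) (hg : MemLp g 2 μ) :
    Integrable (fun ω => f ω * g ω) μ := by
  have h := MemLp.smul (p := 2) (q := 2) (r := 1) hg hf
  rw [← memLp_one_iff_integrable]
  exact h

private lemma smul_one_inv_eq {M : ℕ} (hM : 0 < M) (a : ℝ) :
    (a • (1 : Matrix (Fin M) (Fin M) ℝ))⁻¹ = a⁻¹ • (1 : Matrix (Fin M) (Fin M) ℝ) := by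
  rcases eq_or_ne a 0 with rfl | ha
  · simp only [zero_smul, _root_.inv_zero]
    rw [Matrix.nonsing_inv_apply_not_isUnit]
    haveI : Nonempty (Fin M) := ⟨⟨0, hM⟩⟩
    simp [Matrix.det_zero]
  · apply Matrix.inv_eq_right_inv
    rw [Matrix.smul_mul, Matrix.mul_smul, smul_smul, one_mul, mul_inv_cancel₀ ha, one_smul]

/-- per-block reconstruction error of the aggregate-and-estimate strategy.
`g_1, …, g_K` are independent random vectors in `ℝ^N` whose entries are i.i.d. with mean
`μ_k` and variance `ν_k > 0` (formalized as joint independence of all entries together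
with identical distribution of the entries within each vector); `g = Σ_k ρ_k g_k`,
`ν̃ = Σ_k ρ_k² ν_k`, `μ̃_sq = Σ_k ρ_k² μ_k²`; `d` has zero mean and covariance
`κ(ν̃ + μ̃_sq) I_M`, uncorrelated with `g`; `q̃ = A g + d` with `A Aᵀ = R I_M`,
`N = R·M`.  Then the LMMSE estimate `ĝ` of `g` from `q̃` satisfies
`E[‖g - ĝ‖²] = N ν̃ (1 - ν̃/(R ν̃ + κ(ν̃ + μ̃_sq)))`. -/
theorem aggregate_and_estimate_block_mse
    {Ω : Type*} [MeasurableSpace Ω] (μ : Measure Ω) [IsProbabilityMeasure μ]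
    (K N M : ℕ) (hM : 0 < M) (hN : 0 < N)
    (g : Fin K → Ω → Fin N → ℝ) (ρ μk νk : Fin K → ℝ) (hνk : ∀ k, 0 < νk k)
    (hgmeas : ∀ (k : Fin K) (n : Fin N), Measurable (fun ω => g k ω n))
    (hgL2 : ∀ (k : Fin K) (n : Fin N), MemLp (fun ω => g k ω n) 2 μ)
    (hgindep : iIndepFun
      (fun (p : Fin K × Fin N) (ω : Ω) => g p.1 ω p.2) μ)
    (hgident : ∀ (k : Fin K) (n n' : Fin N),
      Measure.map (fun ω => g k ω n) μ = Measure.map (fun ω => g k ω n') μ)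
    (hgmean : ∀ (k : Fin K) (n : Fin N), ∫ ω, g k ω n ∂μ = μk k)
    (hgvar : ∀ (k : Fin K) (n : Fin N), ∫ ω, (g k ω n - μk k) ^ 2 ∂μ = νk k)
    (G : Ω → Fin N → ℝ) (hG : ∀ ω n, G ω n = ∑ k : Fin K, ρ k * g k ω n)
    (νt μsq mbar : ℝ)
    (hνt : νt = ∑ k : Fin K, (ρ k) ^ 2 * νk k)
    (hμsq : μsq = ∑ k : Fin K, (ρ k) ^ 2 * (μk k) ^ 2)
    (hmbar : mbar = ∑ k : Fin K, ρ k * μk k)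
    (κ : ℝ) (hκ : 0 < κ)
    (d : Ω → Fin M → ℝ)
    (hdL2 : ∀ j, MemLp (fun ω => d ω j) 2 μ)
    (hdmean : ∀ j, ∫ ω, d ω j ∂μ = 0)
    (hdcov : ∀ j j', ∫ ω, d ω j * d ω j' ∂μ =
      κ * (νt + μsq) * (if j = j' then 1 else 0))
    (huncorr : ∀ (n : Fin N) (j : Fin M), ∫ ω, (G ω n - mbar) * d ω j ∂μ = 0)
    (R : ℝ) (hR : 0 < R) (hNRM : (N : ℝ) = R * M)
    (A : Matrix (Fin M) (Fin N) ℝ)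
    (hA : A * Aᵀ = R • (1 : Matrix (Fin M) (Fin M) ℝ))
    (qt : Ω → Fin M → ℝ) (hqt : ∀ ω, qt ω = A.mulVec (G ω) + d ω)
    (ghat : Ω → Fin N → ℝ)
    (hghat : ∀ ω, ghat ω = (fun _ => mbar) + νt •
      Aᵀ.mulVec
        ((νt • (A * Aᵀ) + (κ * (νt + μsq)) • (1 : Matrix (Fin M) (Fin M) ℝ))⁻¹.mulVec
          (qt ω - A.mulVec (fun _ => mbar)))) :
    ∫ ω, ∑ n : Fin N, (G ω n - ghat ω n) ^ 2 ∂μ =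
      N * νt * (1 - νt / (R * νt + κ * (νt + μsq))) := by
  classical
  have hνt0 : 0 ≤ νt := by
    rw [hνt]; exact Finset.sum_nonneg fun k _ => mul_nonneg (sq_nonneg _) (hνk k).le
  have hμsq0 : 0 ≤ μsq := by
    rw [hμsq]; exact Finset.sum_nonneg fun k _ => mul_nonneg (sq_nonneg _) (sq_nonneg _)
  set c : ℝ := κ * (νt + μsq) with hcdef
  have hc0 : 0 ≤ c := mul_nonneg hκ.le (by linarith)
  set s : ℝ := R * νt + c with hsdef
  have hs0 : 0 ≤ s := add_nonneg (mul_nonneg hR.le hνt0) hc0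
  set α : ℝ := νt / s with hαdef
  have hαs : α * s = νt := by
    rcases eq_or_ne s 0 with hs | hs
    · have h1 : R * νt = 0 := by nlinarith [mul_nonneg hR.le hνt0]
      have hν0 : νt = 0 := by
        rcases mul_eq_zero.mp h1 with h | h
        · exact absurd h hR.ne'
        · exact h
      simp [hαdef, hν0]
    · rw [hαdef, div_mul_cancel₀ _ hs]
  -- centered variables
  set X : Ω → Fin N → ℝ := fun ω n => G ω n - mbar with hXdef
  set Z : Fin K → Fin N → Ω → ℝ := fun k n ω => g k ω n - μk k with hZdef
  have hGL2 : ∀ n, MemLp (fun ω => G ω n) 2 μ := by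
    intro n
    have h : (fun ω => G ω n) = fun ω => ∑ k, ρ k * g k ω n := funext fun ω => hG ω n
    rw [h]
    exact memLp_finset_sum _ fun k _ => (hgL2 k n).const_mul _
  have hXL2 : ∀ n, MemLp (fun ω => X ω n) 2 μ := fun n => (hGL2 n).sub (memLp_const _)
  have hZL2 : ∀ k n, MemLp (Z k n) 2 μ := fun k n => (hgL2 k n).sub (memLp_const _)
  have hZint : ∀ k n, Integrable (Z k n) μ := fun k n => (hZL2 k n).integrable one_le_two
  have hZmean : ∀ k n, ∫ ω, Z k n ω ∂μ = 0 := by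
    intro k n
    simp only [hZdef]
    rw [integral_sub ((hgL2 k n).integrable one_le_two) (integrable_const _)]
    simp [hgmean k n]
  have hZmulint : ∀ k n k' n', Integrable (fun ω => Z k n ω * Z k' n' ω) μ :=
    fun k n k' n' => l2_mul_integrable (hZL2 k n) (hZL2 k' n')
  have hZcov0 : ∀ k n k' n', (k, n) ≠ ((k', n') : Fin K × Fin N) →
      ∫ ω, Z k n ω * Z k' n' ω ∂μ = 0 := by
    intro k n k' n' hne
    have hind : IndepFun (fun ω => g k ω n) (fun ω => g k' ω n') μ :=
      hgindep.indepFun (i := (k, n)) (j := (k', n')) hne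
    have hind2 : IndepFun (Z k n) (Z k' n') μ := by
      have h := hind.comp (φ := fun x => x - μk k) (ψ := fun x => x - μk k')
        (measurable_id.sub measurable_const) (measurable_id.sub measurable_const)
      simpa [hZdef, Function.comp_def] using h
    have h := hind2.integral_mul_eq_mul_integral (hZint k n).aestronglyMeasurable (hZint k' n').aestronglyMeasurable
    simpa [hZmean, Pi.mul_apply] using h
  have hZvar : ∀ k n, ∫ ω, Z k n ω * Z k n ω ∂μ = νk k := by
    intro k n
    calc ∫ ω, Z k n ω * Z k n ω ∂μ = ∫ ω, (g k ω n - μk k) ^ 2 ∂μ := by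
          congr 1; funext ω; simp only [hZdef]; ring
      _ = νk k := hgvar k n
  have hXZ : ∀ ω n, X ω n = ∑ k, ρ k * Z k n ω := by
    intro ω n
    simp only [hXdef, hZdef, hG ω n, hmbar, mul_sub, Finset.sum_sub_distrib]
  have hXcov : ∀ n n', ∫ ω, X ω n * X ω n' ∂μ = νt * (if n = n' then 1 else 0) := by
    intro n n'
    have hpt : ∀ ω, X ω n * X ω n' =
        ∑ k, ∑ k', ρ k * ρ k' * (Z k n ω * Z k' n' ω) := by
      intro ω
      rw [hXZ ω n, hXZ ω n', Finset.sum_mul_sum]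
      exact Finset.sum_congr rfl fun k _ => Finset.sum_congr rfl fun k' _ => by ring
    have h1 : ∫ ω, X ω n * X ω n' ∂μ =
        ∑ k, ∑ k', ρ k * ρ k' * ∫ ω, Z k n ω * Z k' n' ω ∂μ := by
      simp_rw [hpt]
      rw [integral_finset_sum _ (fun k _ =>
        integrable_finset_sum _ fun k' _ => (hZmulint k n k' n').const_mul _)]
      refine Finset.sum_congr rfl fun k _ => ?_
      rw [integral_finset_sum _ (fun k' _ => (hZmulint k n k' n').const_mul _)]
      exact Finset.sum_congr rfl fun k' _ => integral_const_mul _ _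
    rw [h1]
    rcases eq_or_ne n n' with rfl | hnn
    · rw [if_pos rfl, mul_one, hνt]
      refine Finset.sum_congr rfl fun k _ => ?_
      rw [Finset.sum_eq_single k]
      · rw [hZvar]; ring
      · intro k' _ hk'
        rw [hZcov0 k n k' n (by simp [Ne.symm hk'])]; ring
      · intro h; exact absurd (Finset.mem_univ k) h
    · simp only [if_neg hnn, mul_zero]
      refine Finset.sum_eq_zero fun k _ => Finset.sum_eq_zero fun k' _ => ?_
      rw [hZcov0 k n k' n' (by simp [hnn])]; ring
  -- matrix facts
  have hAA : ∀ j j', ∑ n, A j n * A j' n = R * (if j = j' then 1 else 0) := by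
    intro j j'
    have h := congrFun (congrFun hA j) j'
    simpa [Matrix.mul_apply, Matrix.transpose_apply, Matrix.smul_apply, Matrix.one_apply,
      smul_eq_mul] using h
  set AX : Ω → Fin M → ℝ := fun ω j => ∑ m, A j m * X ω m with hAXdef
  set T : Ω → Fin M → ℝ := fun ω j => AX ω j + d ω j with hTdef
  -- pointwise error formula
  have hv : ∀ ω, qt ω - A.mulVec (fun _ => mbar) = fun j => AX ω j + d ω j := by
    intro ω; funext j
    simp only [hqt ω, hAXdef, hXdef, Pi.sub_apply, Pi.add_apply, Matrix.mulVec, dotProduct,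
      mul_sub, Finset.sum_sub_distrib]
    ring
  have herr : ∀ ω n, G ω n - ghat ω n = X ω n - α * ∑ j, A j n * T ω j := by
    intro ω n
    have hm : (νt • (A * Aᵀ) + c • (1 : Matrix (Fin M) (Fin M) ℝ)) = s • 1 := by
      rw [hA, smul_smul, ← add_smul]
      congr 1
      rw [hsdef]; ring
    have h1 : ghat ω n = mbar + α * ∑ j, A j n * T ω j := by
      rw [hghat ω]
      rw [hm, smul_one_inv_eq hM, hv ω]
      simp only [Pi.add_apply, Pi.smul_apply, smul_eq_mul, Matrix.mulVec, dotProduct,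
        Matrix.smul_apply, Matrix.one_apply, Matrix.transpose_apply, ite_mul, one_mul,
        zero_mul, mul_ite, mul_zero, mul_one, Finset.sum_ite_eq, Finset.mem_univ, if_pos]
      rw [hαdef, div_eq_mul_inv, Finset.mul_sum]
      have hsum : ∀ j : Fin M, j ∈ Finset.univ →
          νt * (A j n * (s⁻¹ * (AX ω j + d ω j))) = νt * s⁻¹ * (A j n * T ω j) :=
        fun j _ => by rw [hTdef]; ring
      rw [Finset.sum_congr rfl hsum, ← Finset.mul_sum]
    rw [h1, hXdef]; ring
  -- pointwise quadratic expansion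
  have hcross : ∀ ω, ∑ n, X ω n * ∑ j, A j n * T ω j = ∑ j, AX ω j * T ω j := by
    intro ω
    simp_rw [Finset.mul_sum]
    rw [Finset.sum_comm]
    refine Finset.sum_congr rfl fun j _ => ?_
    rw [hAXdef]
    simp only []
    rw [Finset.sum_mul]
    exact Finset.sum_congr rfl fun n _ => by ring
  have hquad : ∀ ω, ∑ n, (∑ j, A j n * T ω j) ^ 2 = R * ∑ j, T ω j ^ 2 := by
    intro ω
    have h1 : ∀ n : Fin N, (∑ j, A j n * T ω j) ^ 2 =
        ∑ j, ∑ j', (T ω j * T ω j') * (A j n * A j' n) := by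
      intro n
      rw [sq, Finset.sum_mul_sum]
      exact Finset.sum_congr rfl fun j _ => Finset.sum_congr rfl fun j' _ => by ring
    simp_rw [h1]
    rw [Finset.sum_comm]
    have h2 : ∀ j : Fin M, ∑ n, ∑ j', T ω j * T ω j' * (A j n * A j' n) =
        ∑ j', T ω j * T ω j' * (R * (if j = j' then 1 else 0)) := by
      intro j
      rw [Finset.sum_comm]
      refine Finset.sum_congr rfl fun j' _ => ?_
      rw [← hAA j j', Finset.mul_sum]
    simp_rw [h2]
    simp only [mul_ite, mul_one, mul_zero, Finset.sum_ite_eq, Finset.sum_ite_eq', Finset.mem_univ, if_pos]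
    rw [Finset.mul_sum]
    exact Finset.sum_congr rfl fun j _ => by ring
  have hsq : ∀ ω, ∑ n, (G ω n - ghat ω n) ^ 2 =
      (∑ n, X ω n ^ 2) - 2 * α * (∑ j, AX ω j * T ω j) + α ^ 2 * (R * ∑ j, T ω j ^ 2) := by
    intro ω
    have e1 : ∀ n : Fin N, (G ω n - ghat ω n) ^ 2 =
        X ω n ^ 2 - 2 * α * (X ω n * ∑ j, A j n * T ω j) +
          α ^ 2 * (∑ j, A j n * T ω j) ^ 2 := by
      intro n; rw [herr ω n]; ring
    rw [Finset.sum_congr rfl fun n _ => e1 n, Finset.sum_add_distrib, Finset.sum_sub_distrib,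
      ← Finset.mul_sum, ← Finset.mul_sum, hcross ω, hquad ω]
  -- integrability
  have hAXL2 : ∀ j, MemLp (fun ω => AX ω j) 2 μ := by
    intro j
    simp only [hAXdef]
    exact memLp_finset_sum _ fun m _ => (hXL2 m).const_mul _
  have hTL2 : ∀ j, MemLp (fun ω => T ω j) 2 μ := by
    intro j
    simp only [hTdef]
    exact (hAXL2 j).add (hdL2 j)
  have intX2 : ∀ n, Integrable (fun ω => X ω n ^ 2) μ := by
    intro n
    have h := l2_mul_integrable (hXL2 n) (hXL2 n)
    simpa [pow_two] using h
  have intAXT : ∀ j, Integrable (fun ω => AX ω j * T ω j) μ :=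
    fun j => l2_mul_integrable (hAXL2 j) (hTL2 j)
  have intT2 : ∀ j, Integrable (fun ω => T ω j ^ 2) μ := by
    intro j
    have h := l2_mul_integrable (hTL2 j) (hTL2 j)
    simpa [pow_two] using h
  have intAX2 : ∀ j, Integrable (fun ω => AX ω j * AX ω j) μ :=
    fun j => l2_mul_integrable (hAXL2 j) (hAXL2 j)
  have intAXd : ∀ j, Integrable (fun ω => AX ω j * d ω j) μ :=
    fun j => l2_mul_integrable (hAXL2 j) (hdL2 j)
  have intXd : ∀ n j, Integrable (fun ω => X ω n * d ω j) μ :=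
    fun n j => l2_mul_integrable (hXL2 n) (hdL2 j)
  have intXX : ∀ n n', Integrable (fun ω => X ω n * X ω n') μ :=
    fun n n' => l2_mul_integrable (hXL2 n) (hXL2 n')
  have intdd : ∀ j, Integrable (fun ω => d ω j * d ω j) μ :=
    fun j => l2_mul_integrable (hdL2 j) (hdL2 j)
  -- expected values
  have hI1 : ∫ ω, ∑ n, X ω n ^ 2 ∂μ = N * νt := by
    rw [integral_finset_sum _ fun n _ => intX2 n]
    have h : ∀ n : Fin N, ∫ ω, X ω n ^ 2 ∂μ = νt := by
      intro n
      have h2 := hXcov n n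
      simp only [eq_self_iff_true, if_true, mul_one] at h2
      rw [← h2]
      congr 1; funext ω; ring
    simp [h, Finset.sum_const, Finset.card_univ, nsmul_eq_mul]
  have hXd0 : ∀ n j, ∫ ω, X ω n * d ω j ∂μ = 0 := by
    intro n j
    have h := huncorr n j
    simpa [hXdef] using h
  have hI2 : ∀ j, ∫ ω, AX ω j * AX ω j ∂μ = νt * R := by
    intro j
    have hpt : ∀ ω, AX ω j * AX ω j =
        ∑ m, ∑ m', A j m * A j m' * (X ω m * X ω m') := by
      intro ω
      rw [hAXdef]
      simp only []
      rw [Finset.sum_mul_sum]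
      exact Finset.sum_congr rfl fun m _ => Finset.sum_congr rfl fun m' _ => by ring
    have h1 : ∫ ω, AX ω j * AX ω j ∂μ =
        ∑ m, ∑ m', A j m * A j m' * ∫ ω, X ω m * X ω m' ∂μ := by
      simp_rw [hpt]
      rw [integral_finset_sum _ (fun m _ =>
        integrable_finset_sum _ fun m' _ => (intXX m m').const_mul _)]
      refine Finset.sum_congr rfl fun m _ => ?_
      rw [integral_finset_sum _ (fun m' _ => (intXX m m').const_mul _)]
      exact Finset.sum_congr rfl fun m' _ => integral_const_mul _ _
    rw [h1]
    simp_rw [hXcov]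
    simp only [mul_ite, mul_one, mul_zero, Finset.sum_ite_eq, Finset.sum_ite_eq',
      Finset.mem_univ, if_pos]
    have h3 := hAA j j
    simp only [eq_self_iff_true, if_true, mul_one] at h3
    calc ∑ m, A j m * A j m * νt = (∑ m, A j m * A j m) * νt := by rw [Finset.sum_mul]
      _ = R * νt := by rw [h3]
      _ = νt * R := by ring
  have hI3 : ∀ j, ∫ ω, AX ω j * d ω j ∂μ = 0 := by
    intro j
    have hpt : ∀ ω, AX ω j * d ω j = ∑ m, A j m * (X ω m * d ω j) := by
      intro ω
      rw [hAXdef]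
      simp only []
      rw [Finset.sum_mul]
      exact Finset.sum_congr rfl fun m _ => by ring
    simp_rw [hpt]
    rw [integral_finset_sum _ (fun m _ => (intXd m j).const_mul _)]
    refine Finset.sum_eq_zero fun m _ => ?_
    rw [integral_const_mul, hXd0 m j, mul_zero]
  have hdd : ∀ j, ∫ ω, d ω j * d ω j ∂μ = c := by
    intro j
    have h := hdcov j j
    simpa using h
  -- sums
  have intSumX2 : Integrable (fun ω => ∑ n, X ω n ^ 2) μ :=
    integrable_finset_sum _ fun n _ => intX2 n
  have intSumAXT : Integrable (fun ω => ∑ j, AX ω j * T ω j) μ :=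
    integrable_finset_sum _ fun j _ => intAXT j
  have intSumT2 : Integrable (fun ω => ∑ j, T ω j ^ 2) μ :=
    integrable_finset_sum _ fun j _ => intT2 j
  have hJ1 : ∫ ω, ∑ j, AX ω j * T ω j ∂μ = M * (νt * R) := by
    rw [integral_finset_sum _ fun j _ => intAXT j]
    have h : ∀ j : Fin M, ∫ ω, AX ω j * T ω j ∂μ = νt * R := by
      intro j
      have hpt : (fun ω => AX ω j * T ω j) =
          fun ω => AX ω j * AX ω j + AX ω j * d ω j := by
        funext ω; rw [hTdef]; ring
      rw [hpt, integral_add (intAX2 j) (intAXd j), hI2 j, hI3 j, add_zero]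
    simp [h, Finset.sum_const, Finset.card_univ, nsmul_eq_mul]
  have hJ2 : ∫ ω, ∑ j, T ω j ^ 2 ∂μ = M * (νt * R + c) := by
    rw [integral_finset_sum _ fun j _ => intT2 j]
    have h : ∀ j : Fin M, ∫ ω, T ω j ^ 2 ∂μ = νt * R + c := by
      intro j
      have hpt : (fun ω => T ω j ^ 2) =
          fun ω => AX ω j * AX ω j + (2 * (AX ω j * d ω j) + d ω j * d ω j) := by
        funext ω; rw [hTdef]; ring
      have i1 : Integrable (fun ω => 2 * (AX ω j * d ω j) + d ω j * d ω j) μ :=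
        ((intAXd j).const_mul 2).add (intdd j)
      rw [hpt, integral_add (intAX2 j) i1,
        integral_add ((intAXd j).const_mul 2) (intdd j), integral_const_mul,
        hI2 j, hI3 j, hdd j]
      ring
    simp [h, Finset.sum_const, Finset.card_univ, nsmul_eq_mul]
    ring
  -- put it together
  have hmain : ∫ ω, ∑ n, (G ω n - ghat ω n) ^ 2 ∂μ =
      (N : ℝ) * νt - 2 * α * ((M : ℝ) * (νt * R)) + α ^ 2 * (R * ((M : ℝ) * (νt * R + c))) := by
    rw [integral_congr_ae (Filter.Eventually.of_forall hsq)]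
    have ifg : Integrable
        (fun ω => (∑ n, X ω n ^ 2) - 2 * α * ∑ j, AX ω j * T ω j) μ :=
      intSumX2.sub (intSumAXT.const_mul (2 * α))
    have ic : Integrable (fun ω => α ^ 2 * (R * ∑ j, T ω j ^ 2)) μ :=
      (intSumT2.const_mul R).const_mul (α ^ 2)
    have isub : Integrable (fun ω => 2 * α * ∑ j, AX ω j * T ω j) μ :=
      intSumAXT.const_mul (2 * α)
    rw [integral_add ifg ic, integral_sub intSumX2 isub,
      integral_const_mul, integral_const_mul, integral_const_mul]
    rw [hI1, hJ1, hJ2]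
  rw [hmain]
  have hs' : νt * R + c = s := by rw [hsdef]; ring
  rw [hs', hNRM]
  linear_combination (α * R * (M : ℝ)) * hαs
end

section
/- Let F : ℝ^n → ℝ be differentiable with gradient ∇F that is Lipschitz continuous with constant β > 0 (β-smooth). Let w, g, e ∈ ℝ^n, η > 0, and ε ∈ [0, 1) with ‖e‖² ≤ ε ‖∇F(w)‖². Then F(w − η(g + e)) − F(w) ≤ −η ⟨∇F(w), g⟩ + η √ε ‖∇F(w)‖² + η² β ( ‖g‖² + ε ‖∇F(w)‖² ). -/
open InnerProductSpace

section aux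
variable {n : ℕ}

lemma descent_lemma (F : EuclideanSpace ℝ (Fin n) → ℝ)
    (hF : Differentiable ℝ F) (β : ℝ) (hβ : 0 < β)
    (hLip : ∀ x y, ‖gradient F x - gradient F y‖ ≤ β * ‖x - y‖)
    (x y : EuclideanSpace ℝ (Fin n)) :
    F y ≤ F x + (inner ℝ (gradient F x) (y - x) : ℝ) + β / 2 * ‖y - x‖ ^ 2 := by
  set v := y - x with hv
  set φ : ℝ → EuclideanSpace ℝ (Fin n) := fun t => x + t • v with hφ
  have hφd : ∀ t : ℝ, HasDerivAt φ v t := fun t => by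
    simpa [hφ] using ((hasDerivAt_id t).smul_const v).const_add x
  set f' : ℝ → ℝ := fun t => (inner ℝ (gradient F (φ t)) v : ℝ) with hf'
  have hfd : ∀ t : ℝ, HasDerivAt (fun t => F (φ t)) (f' t) t := fun t => by
    have h1 := (hF (φ t)).hasGradientAt.hasFDerivAt.comp_hasDerivAt t (hφd t)
    simpa [f', InnerProductSpace.toDual_apply_apply, Function.comp_def] using h1
  -- continuity of gradient
  have hgradc : Continuous (gradient F) := by
    have : LipschitzWith β.toNNReal (gradient F) := by
      apply LipschitzWith.of_dist_le_mul
      intro a b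
      simpa [dist_eq_norm, Real.coe_toNNReal _ hβ.le] using hLip a b
    exact this.continuous
  have hcf' : Continuous f' := by
    exact (hgradc.comp (by continuity : Continuous φ)).inner continuous_const
  have hint : IntervalIntegrable f' MeasureTheory.volume 0 1 :=
    hcf'.intervalIntegrable 0 1
  have key : F y - F x = ∫ t in (0:ℝ)..1, f' t := by
    have := intervalIntegral.integral_eq_sub_of_hasDerivAt
      (f := fun t => F (φ t)) (f' := f') (a := (0:ℝ)) (b := 1)
      (fun t _ => hfd t) hint
    have hxy : φ 1 = y := by simp [φ, hv]
    have hx0 : φ 0 = x := by simp [φ]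
    rw [← hxy, ← hx0]
    exact this.symm
  have hbound : ∀ t ∈ Set.Icc (0:ℝ) 1, f' t ≤ f' 0 + β * t * ‖v‖ ^ 2 := by
    intro t ht
    have h1 : f' t - f' 0 ≤ ‖gradient F (φ t) - gradient F (φ 0)‖ * ‖v‖ := by
      have : f' t - f' 0 = (inner ℝ (gradient F (φ t) - gradient F (φ 0)) v : ℝ) := by
        simp [f', inner_sub_left]
      rw [this]
      exact (real_inner_le_norm _ _)
    have h2 : ‖gradient F (φ t) - gradient F (φ 0)‖ ≤ β * (t * ‖v‖) := by
      have := hLip (φ t) (φ 0)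
      have hφ0 : φ t - φ 0 = t • v := by simp [φ]
      rw [hφ0] at this
      simpa [norm_smul, abs_of_nonneg ht.1] using this
    nlinarith [norm_nonneg v, norm_nonneg (gradient F (φ t) - gradient F (φ 0)), mul_nonneg (mul_nonneg hβ.le ht.1) (norm_nonneg v)]
  have hmono : (∫ t in (0:ℝ)..1, f' t) ≤ ∫ t in (0:ℝ)..1, (f' 0 + β * t * ‖v‖ ^ 2) := by
    apply intervalIntegral.integral_mono_on zero_le_one hint
    · exact ((continuous_const.add ((continuous_const.mul continuous_id).mul
        continuous_const))).intervalIntegrable 0 1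
    · exact hbound
  have hival : (∫ t in (0:ℝ)..1, (f' 0 + β * t * ‖v‖ ^ 2)) = f' 0 + β / 2 * ‖v‖ ^ 2 := by
    rw [intervalIntegral.integral_add (intervalIntegrable_const)
      ((by fun_prop : Continuous fun t : ℝ => β * t * ‖v‖ ^ 2).intervalIntegrable 0 1)]
    have h1 : (∫ t in (0:ℝ)..1, β * t * ‖v‖ ^ 2) = β / 2 * ‖v‖ ^ 2 := by
      have h2 : (fun t : ℝ => β * t * ‖v‖ ^ 2) = fun t : ℝ => (β * ‖v‖ ^ 2) * t := by
        ext t; ring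
      rw [h2, intervalIntegral.integral_const_mul, integral_id]
      ring
    rw [h1]
    simp
  have hf'0 : f' 0 = (inner ℝ (gradient F x) v : ℝ) := by simp [f', φ]
  have hfin := hmono.trans_eq hival
  rw [hf'0] at hfin
  linarith [key, hfin]

end aux


/-- deterministic one-step descent bound.  If `F` is differentiable with
`β`-Lipschitz gradient, `η > 0`, `ε ∈ [0,1)` and `‖e‖² ≤ ε ‖∇F(w)‖²`, then
`F(w - η(g + e)) - F(w) ≤ -η ⟨∇F(w), g⟩ + η √ε ‖∇F(w)‖² + η² β (‖g‖² + ε ‖∇F(w)‖²)`. -/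
theorem one_step_descent_bound
    (n : ℕ) (F : EuclideanSpace ℝ (Fin n) → ℝ)
    (hF : Differentiable ℝ F)
    (β : ℝ) (hβ : 0 < β)
    (hLip : ∀ x y, ‖gradient F x - gradient F y‖ ≤ β * ‖x - y‖)
    (w g e : EuclideanSpace ℝ (Fin n))
    (η : ℝ) (hη : 0 < η)
    (ε : ℝ) (hε0 : 0 ≤ ε) (hε1 : ε < 1)
    (he : ‖e‖ ^ 2 ≤ ε * ‖gradient F w‖ ^ 2) :
    F (w - η • (g + e)) - F w ≤
      -η * (inner ℝ (gradient F w) g : ℝ) + η * Real.sqrt ε * ‖gradient F w‖ ^ 2 +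
        η ^ 2 * β * (‖g‖ ^ 2 + ε * ‖gradient F w‖ ^ 2) := by
  set G := gradient F w with hG
  have hd := descent_lemma F hF β hβ hLip w (w - η • (g + e))
  have hsub : w - η • (g + e) - w = -(η • (g + e)) := by abel
  rw [hsub] at hd
  have hinner : (inner ℝ G (-(η • (g + e))) : ℝ)
      = -(η * (inner ℝ G g : ℝ)) - η * (inner ℝ G e : ℝ) := by
    rw [inner_neg_right, real_inner_smul_right, inner_add_right]
    ring
  have hnorm : ‖-(η • (g + e))‖ ^ 2 = η ^ 2 * ‖g + e‖ ^ 2 := by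
    rw [norm_neg, norm_smul, mul_pow, Real.norm_eq_abs, sq_abs]
  rw [hinner, hnorm] at hd
  have hee : ‖e‖ ≤ Real.sqrt ε * ‖G‖ := by
    have h1 := Real.sqrt_le_sqrt he
    rwa [Real.sqrt_sq (norm_nonneg e), Real.sqrt_mul hε0, Real.sqrt_sq (norm_nonneg G)] at h1
  have hGe : -(inner ℝ G e : ℝ) ≤ Real.sqrt ε * ‖G‖ ^ 2 := by
    have h1 : -(inner ℝ G e : ℝ) ≤ ‖G‖ * ‖e‖ := by
      have := abs_real_inner_le_norm G e
      have := abs_le.mp this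
      linarith [this.1]
    calc -(inner ℝ G e : ℝ) ≤ ‖G‖ * ‖e‖ := h1
      _ ≤ ‖G‖ * (Real.sqrt ε * ‖G‖) :=
        mul_le_mul_of_nonneg_left hee (norm_nonneg G)
      _ = Real.sqrt ε * ‖G‖ ^ 2 := by ring
  have hge2 : ‖g + e‖ ^ 2 ≤ 2 * (‖g‖ ^ 2 + ‖e‖ ^ 2) := by
    nlinarith [mul_self_le_mul_self (norm_nonneg (g + e)) (norm_add_le g e),
      sq_nonneg (‖g‖ - ‖e‖)]
  have h3 : β / 2 * (η ^ 2 * ‖g + e‖ ^ 2) ≤ η ^ 2 * β * (‖g‖ ^ 2 + ε * ‖G‖ ^ 2) := by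
    nlinarith [hge2, he, mul_nonneg (sq_nonneg η) hβ.le,
      mul_le_mul_of_nonneg_left hge2 (mul_nonneg (div_nonneg hβ.le two_pos.le) (sq_nonneg η)),
      mul_le_mul_of_nonneg_left he (mul_nonneg (sq_nonneg η) hβ.le)]
  have h4 : -(η * (inner ℝ G e : ℝ)) ≤ η * Real.sqrt ε * ‖G‖ ^ 2 := by
    have := mul_le_mul_of_nonneg_left hGe hη.le
    nlinarith [this]
  linarith [hd]
end

section
/- Under the setting of the single-step expected descent bound — F : ℝ^n → ℝ β-smooth (β > 0), w ∈ ℝ^n, ε ∈ [0,1), σ ≥ 0, and square-integrable random vectors g, e with E[g] = ∇F(w), E[‖g‖²] ≤ ‖∇F(w)‖² + σ², and ‖e‖² ≤ ε ‖∇F(w)‖² almost surely — if the learning rate is chosen as η = (1 − √ε) / (2β(1 + ε)√T) for an integer T ≥ 1, then E[ F(w − η(g + e)) ] − F(w) ≤ −( (1 − √ε)² / (4β(1 + ε)√T) ) ‖∇F(w)‖² + ( (1 − √ε)² / (4β(1 + ε)² T) ) σ². -/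
open MeasureTheory InnerProductSpace

lemma my_smooth_descent {E : Type*} [NormedAddCommGroup E] [InnerProductSpace ℝ E]
    [CompleteSpace E]
    (F : E → ℝ) (hF : Differentiable ℝ F) (β : ℝ) (hβ : 0 ≤ β)
    (hLip : ∀ x y, ‖gradient F x - gradient F y‖ ≤ β * ‖x - y‖) (x y : E) :
    F y ≤ F x + (inner ℝ (gradient F x) (y - x) : ℝ) + β / 2 * ‖y - x‖ ^ 2 := by
  set v := y - x with hv
  set c : ℝ := inner ℝ (gradient F x) v with hc
  set ψ : ℝ → ℝ := fun t => F (x + t • v) - t * c - (β / 2 * ‖v‖ ^ 2) * t ^ 2 with hψ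
  have hpath : ∀ t : ℝ, HasDerivAt (fun s : ℝ => x + s • v) v t := by
    intro t
    simpa using ((hasDerivAt_id t).smul_const v).const_add x
  have hφ : ∀ t : ℝ, HasDerivAt (fun s => F (x + s • v))
      (inner ℝ (gradient F (x + t • v)) v : ℝ) t := by
    intro t
    have hfd : HasFDerivAt F (toDual ℝ E (gradient F (x + t • v))) (x + t • v) :=
      hasGradientAt_iff_hasFDerivAt.mp (hF _).hasGradientAt
    simpa [InnerProductSpace.toDual_apply_apply, Function.comp_def] using hfd.comp_hasDerivAt t (hpath t)
  have hψd : ∀ t : ℝ, HasDerivAt ψ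
      ((inner ℝ (gradient F (x + t • v)) v : ℝ) - c - (β / 2 * ‖v‖ ^ 2) * (2 * t)) t := by
    intro t
    have h2 : HasDerivAt (fun s : ℝ => s * c) c t := by
      simpa using (hasDerivAt_id t).mul_const c
    have h3 : HasDerivAt (fun s : ℝ => (β / 2 * ‖v‖ ^ 2) * s ^ 2)
        ((β / 2 * ‖v‖ ^ 2) * (2 * t)) t := by
      simpa using (hasDerivAt_pow 2 t).const_mul (β / 2 * ‖v‖ ^ 2)
    exact ((hφ t).sub h2).sub h3
  have hanti : AntitoneOn ψ (Set.Icc (0:ℝ) 1) := by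
    apply antitoneOn_of_deriv_nonpos (convex_Icc 0 1)
    · exact (((hF.continuous.comp (by continuity)).sub (by continuity)).sub
        (by continuity)).continuousOn
    · intro t _
      exact (hψd t).differentiableAt.differentiableWithinAt
    · intro t ht
      rw [interior_Icc] at ht
      rw [(hψd t).deriv]
      have key : (inner ℝ (gradient F (x + t • v)) v : ℝ) - c ≤ β * t * ‖v‖ ^ 2 := by
        have h1 : (inner ℝ (gradient F (x + t • v)) v : ℝ) - c
            = inner ℝ (gradient F (x + t • v) - gradient F x) v := by
          rw [hc, inner_sub_left]
        rw [h1]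
        have hn : ‖x + t • v - x‖ = t * ‖v‖ := by
          rw [add_sub_cancel_left, norm_smul, Real.norm_eq_abs, abs_of_pos ht.1]
        calc (inner ℝ (gradient F (x + t • v) - gradient F x) v : ℝ)
            ≤ ‖gradient F (x + t • v) - gradient F x‖ * ‖v‖ := real_inner_le_norm _ _
          _ ≤ (β * ‖x + t • v - x‖) * ‖v‖ :=
              mul_le_mul_of_nonneg_right (hLip _ _) (norm_nonneg _)
          _ = β * t * ‖v‖ ^ 2 := by rw [hn]; ring
      nlinarith [key]
  have h01 : ψ 1 ≤ ψ 0 := hanti (by norm_num) (by norm_num) zero_le_one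
  have hψ0 : ψ 0 = F x := by simp [hψ]
  have hψ1 : ψ 1 = F y - c - β / 2 * ‖v‖ ^ 2 := by
    simp [hψ, hv]
  rw [hψ0, hψ1] at h01
  linarith

lemma my_gradient_neg {E : Type*} [NormedAddCommGroup E] [InnerProductSpace ℝ E]
    [CompleteSpace E] (F : E → ℝ) (z : E) (hFz : DifferentiableAt ℝ F z) :
    gradient (fun y => -F y) z = -gradient F z := by
  have h : HasFDerivAt F (toDual ℝ E (gradient F z)) z :=
    hasGradientAt_iff_hasFDerivAt.mp hFz.hasGradientAt
  have h3 : HasFDerivAt (fun y => -F y) (toDual ℝ E (-gradient F z)) z := by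
    rw [map_neg]; exact h.neg
  exact (hasGradientAt_iff_hasFDerivAt.mpr h3).gradient

lemma my_smooth_descent_lower {E : Type*} [NormedAddCommGroup E] [InnerProductSpace ℝ E]
    [CompleteSpace E]
    (F : E → ℝ) (hF : Differentiable ℝ F) (β : ℝ) (hβ : 0 ≤ β)
    (hLip : ∀ x y, ‖gradient F x - gradient F y‖ ≤ β * ‖x - y‖) (x y : E) :
    F x + (inner ℝ (gradient F x) (y - x) : ℝ) - β / 2 * ‖y - x‖ ^ 2 ≤ F y := by
  have hG : Differentiable ℝ (fun z => -F z) := hF.neg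
  have hgr : ∀ z, gradient (fun y => -F y) z = -gradient F z :=
    fun z => my_gradient_neg F z (hF z)
  have hLip' : ∀ a b, ‖gradient (fun z => -F z) a - gradient (fun z => -F z) b‖
      ≤ β * ‖a - b‖ := by
    intro a b
    rw [hgr a, hgr b, neg_sub_neg]
    have h := hLip b a
    rwa [norm_sub_rev b a] at h
  have := my_smooth_descent (fun z => -F z) hG β hβ hLip' x y
  rw [hgr x, inner_neg_left] at this
  linarith

set_option maxHeartbeats 2000000 in
/-- expected one-step descent bound with the tuned learning rate
`η = (1 - √ε)/(2β(1 + ε)√T)` for an integer `T ≥ 1`: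
`E[F(w - η(g + e))] - F(w)
  ≤ -((1-√ε)²/(4β(1+ε)√T)) ‖∇F(w)‖² + ((1-√ε)²/(4β(1+ε)²T)) σ²`. -/
theorem expected_one_step_descent_bound_tuned_rate
    (n : ℕ) (F : EuclideanSpace ℝ (Fin n) → ℝ)
    (hF : Differentiable ℝ F)
    (β : ℝ) (hβ : 0 < β)
    (hLip : ∀ x y, ‖gradient F x - gradient F y‖ ≤ β * ‖x - y‖)
    {Ω : Type*} [MeasurableSpace Ω] (μ : Measure Ω) [IsProbabilityMeasure μ]
    (w : EuclideanSpace ℝ (Fin n))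
    (ε : ℝ) (hε0 : 0 ≤ ε) (hε1 : ε < 1)
    (σ : ℝ) (hσ : 0 ≤ σ)
    (T : ℕ) (hT : 1 ≤ T)
    (η : ℝ) (hη : η = (1 - Real.sqrt ε) / (2 * β * (1 + ε) * Real.sqrt T))
    (g e : Ω → EuclideanSpace ℝ (Fin n))
    (hgL2 : MemLp g 2 μ) (heL2 : MemLp e 2 μ)
    (hgmean : ∫ ω, g ω ∂μ = gradient F w)
    (hgnorm : ∫ ω, ‖g ω‖ ^ 2 ∂μ ≤ ‖gradient F w‖ ^ 2 + σ ^ 2)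
    (he : ∀ᵐ ω ∂μ, ‖e ω‖ ^ 2 ≤ ε * ‖gradient F w‖ ^ 2) :
    (∫ ω, F (w - η • (g ω + e ω)) ∂μ) - F w ≤
      -((1 - Real.sqrt ε) ^ 2 / (4 * β * (1 + ε) * Real.sqrt T)) *
          ‖gradient F w‖ ^ 2 +
        ((1 - Real.sqrt ε) ^ 2 / (4 * β * (1 + ε) ^ 2 * T)) * σ ^ 2 := by
  set v : EuclideanSpace ℝ (Fin n) := gradient F w with hv
  set s : ℝ := Real.sqrt ε with hs
  set r : ℝ := Real.sqrt T with hr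
  set d : Ω → EuclideanSpace ℝ (Fin n) := fun ω => g ω + e ω with hd
  have hgoal_eq : (∫ ω, F (w - η • (g ω + e ω)) ∂μ) = ∫ ω, F (w - η • d ω) ∂μ := rfl
  have hde : ∀ ω, d ω = g ω + e ω := fun _ => rfl
  rw [hgoal_eq]
  clear_value v s r d
  -- scalar facts
  have hs0 : 0 ≤ s := by rw [hs]; exact Real.sqrt_nonneg _
  have hs1 : s ≤ 1 := by
    rw [hs]; nlinarith [Real.sq_sqrt hε0, Real.sqrt_nonneg ε]
  have hT1 : (1:ℝ) ≤ (T:ℝ) := by exact_mod_cast hT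
  have hT0 : (0:ℝ) < (T:ℝ) := by linarith
  have hr1 : 1 ≤ r := by rw [hr, Real.one_le_sqrt]; exact hT1
  have hr0 : 0 < r := by linarith
  have hr2 : r ^ 2 = (T:ℝ) := by rw [hr]; exact Real.sq_sqrt (by positivity)
  have hrT : r ≤ (T:ℝ) := by nlinarith
  have h1e : (0:ℝ) < 1 + ε := by linarith
  have hη0 : 0 ≤ η := by
    rw [hη]
    apply div_nonneg (by linarith)
    have : 0 < 2 * β * (1 + ε) * r := by
      exact mul_pos (mul_pos (mul_pos (by norm_num) hβ) h1e) hr0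
    linarith
  -- integrability
  have hdL2 : MemLp d 2 μ := by rw [funext hde]; exact hgL2.add heL2
  have hg1 : Integrable g μ := hgL2.integrable one_le_two
  have he1 : Integrable e μ := heL2.integrable one_le_two
  have hd1 : Integrable d μ := hdL2.integrable one_le_two
  have hdsq : Integrable (fun ω => ‖d ω‖ ^ 2) μ := by simpa using hdL2.norm.integrable_sq
  have hgsq : Integrable (fun ω => ‖g ω‖ ^ 2) μ := by simpa using hgL2.norm.integrable_sq
  have hesq : Integrable (fun ω => ‖e ω‖ ^ 2) μ := by simpa using heL2.norm.integrable_sq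
  have hdi : Integrable (fun ω => (inner ℝ v (d ω) : ℝ)) μ := hd1.const_inner v
  -- pointwise two-sided bound
  have hkey : ∀ ω : Ω,
      (F (w - η • d ω) ≤ F w - η * (inner ℝ v (d ω) : ℝ) + β / 2 * η ^ 2 * ‖d ω‖ ^ 2)
      ∧ (F w - η * (inner ℝ v (d ω) : ℝ) - β / 2 * η ^ 2 * ‖d ω‖ ^ 2 ≤ F (w - η • d ω)) := by
    intro ω
    have hyx : (w - η • d ω) - w = -(η • d ω) := by abel
    have hinner : (inner ℝ v ((w - η • d ω) - w) : ℝ) = -(η * (inner ℝ v (d ω) : ℝ)) := by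
      rw [hyx, inner_neg_right, real_inner_smul_right]
    have hnorm : ‖(w - η • d ω) - w‖ ^ 2 = η ^ 2 * ‖d ω‖ ^ 2 := by
      rw [hyx, norm_neg, norm_smul, mul_pow, Real.norm_eq_abs, sq_abs]
    have h1 := my_smooth_descent F hF β hβ.le hLip w (w - η • d ω)
    have h2 := my_smooth_descent_lower F hF β hβ.le hLip w (w - η • d ω)
    rw [← hv, hinner, hnorm] at h1 h2
    constructor <;> linarith
  have hbase : Integrable
      (fun ω => F w - η * (inner ℝ v (d ω) : ℝ) + β / 2 * η ^ 2 * ‖d ω‖ ^ 2) μ :=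
    ((integrable_const (F w)).sub (hdi.const_mul η)).add (hdsq.const_mul (β / 2 * η ^ 2))
  have hΦm : AEStronglyMeasurable (fun ω => F (w - η • d ω)) μ :=
    hF.continuous.comp_aestronglyMeasurable
      (aestronglyMeasurable_const.sub (hdL2.aestronglyMeasurable.const_smul η))
  have hΦint : Integrable (fun ω => F (w - η • d ω)) μ := by
    refine Integrable.mono'
      (g := fun ω => |F w - η * (inner ℝ v (d ω) : ℝ)| + β / 2 * η ^ 2 * ‖d ω‖ ^ 2)
      ((((integrable_const (F w)).sub (hdi.const_mul η)).abs).add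
        (hdsq.const_mul (β / 2 * η ^ 2))) hΦm ?_
    filter_upwards with ω
    have hq : 0 ≤ β / 2 * η ^ 2 * ‖d ω‖ ^ 2 := by positivity
    rw [Real.norm_eq_abs, abs_le]
    constructor
    · have := neg_abs_le (F w - η * (inner ℝ v (d ω) : ℝ))
      linarith [(hkey ω).2]
    · have := le_abs_self (F w - η * (inner ℝ v (d ω) : ℝ))
      linarith [(hkey ω).1]
  -- integrate the upper bound
  have hIle : ∫ ω, F (w - η • d ω) ∂μ ≤
      F w - η * (inner ℝ v (∫ ω, d ω ∂μ) : ℝ) + β / 2 * η ^ 2 * ∫ ω, ‖d ω‖ ^ 2 ∂μ := by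
    have hI1 : Integrable (fun ω => F w - η * (inner ℝ v (d ω) : ℝ)) μ :=
      (integrable_const (F w)).sub (hdi.const_mul η)
    have hI2 : Integrable (fun ω => β / 2 * η ^ 2 * ‖d ω‖ ^ 2) μ :=
      hdsq.const_mul (β / 2 * η ^ 2)
    have h1 := integral_mono hΦint hbase (fun ω => (hkey ω).1)
    rw [integral_add hI1 hI2,
      integral_sub (integrable_const (F w)) (hdi.const_mul η), integral_const,
      integral_const_mul, integral_const_mul, integral_inner hd1] at h1
    simpa [measure_univ] using h1
  -- mean of d
  have hId : ∫ ω, d ω ∂μ = v + ∫ ω, e ω ∂μ := by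
    have : ∫ ω, d ω ∂μ = ∫ ω, (g ω + e ω) ∂μ := by simp only [hde]
    rw [this, integral_add hg1 he1, hgmean]
  -- bound on mean of e
  have hm : ‖∫ ω, e ω ∂μ‖ ≤ s * ‖v‖ := by
    have hae : ∀ᵐ ω ∂μ, ‖e ω‖ ≤ s * ‖v‖ := by
      filter_upwards [he] with ω hω
      have h1 : ‖e ω‖ = Real.sqrt (‖e ω‖ ^ 2) := (Real.sqrt_sq (norm_nonneg _)).symm
      rw [h1]
      calc Real.sqrt (‖e ω‖ ^ 2) ≤ Real.sqrt (ε * ‖v‖ ^ 2) := Real.sqrt_le_sqrt hω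
        _ = s * ‖v‖ := by
            rw [Real.sqrt_mul hε0, Real.sqrt_sq (norm_nonneg _), ← hs]
    calc ‖∫ ω, e ω ∂μ‖ ≤ ∫ ω, ‖e ω‖ ∂μ := norm_integral_le_integral_norm _
      _ ≤ ∫ _ω, s * ‖v‖ ∂μ := integral_mono_ae he1.norm (integrable_const _) hae
      _ = s * ‖v‖ := by simp [measure_univ]
  have hinner_low : (1 - s) * ‖v‖ ^ 2 ≤ (inner ℝ v (∫ ω, d ω ∂μ) : ℝ) := by
    rw [hId, inner_add_right, real_inner_self_eq_norm_sq]
    have habs := abs_real_inner_le_norm v (∫ ω, e ω ∂μ)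
    have h1 := (abs_le.mp habs).1
    have h2 : ‖v‖ * ‖∫ ω, e ω ∂μ‖ ≤ ‖v‖ * (s * ‖v‖) :=
      mul_le_mul_of_nonneg_left hm (norm_nonneg v)
    have h3 : ‖v‖ * (s * ‖v‖) = s * ‖v‖ ^ 2 := by ring
    linarith
  -- second moment bound
  have hdsq_bound : ∫ ω, ‖d ω‖ ^ 2 ∂μ ≤ 2 * (1 + ε) * ‖v‖ ^ 2 + 2 * σ ^ 2 := by
    have hpt : ∀ ω, ‖d ω‖ ^ 2 ≤ 2 * ‖g ω‖ ^ 2 + 2 * ‖e ω‖ ^ 2 := by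
      intro ω
      have h0 : ‖d ω‖ ≤ ‖g ω‖ + ‖e ω‖ := by rw [hde ω]; exact norm_add_le _ _
      have h0' : 0 ≤ ‖d ω‖ := norm_nonneg _
      have h5 : ‖d ω‖ ^ 2 ≤ (‖g ω‖ + ‖e ω‖) ^ 2 := pow_le_pow_left₀ h0' h0 2
      nlinarith [sq_nonneg (‖g ω‖ - ‖e ω‖)]
    have hI3 : Integrable (fun ω => 2 * ‖g ω‖ ^ 2) μ := hgsq.const_mul 2
    have hI4 : Integrable (fun ω => 2 * ‖e ω‖ ^ 2) μ := hesq.const_mul 2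
    have hI5 : Integrable (fun ω => 2 * ‖g ω‖ ^ 2 + 2 * ‖e ω‖ ^ 2) μ := hI3.add hI4
    have h1 := integral_mono hdsq hI5 hpt
    rw [integral_add hI3 hI4, integral_const_mul, integral_const_mul] at h1
    have h2 : ∫ ω, ‖e ω‖ ^ 2 ∂μ ≤ ε * ‖v‖ ^ 2 := by
      calc ∫ ω, ‖e ω‖ ^ 2 ∂μ ≤ ∫ _ω, ε * ‖v‖ ^ 2 ∂μ :=
            integral_mono_ae hesq (integrable_const _) he
        _ = ε * ‖v‖ ^ 2 := by simp [measure_univ]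
    linarith [hgnorm]
  -- combine
  have hβη : 0 ≤ β / 2 * η ^ 2 := by positivity
  have hmid : (∫ ω, F (w - η • d ω) ∂μ) - F w ≤
      -(η * (1 - s) * ‖v‖ ^ 2) + β * η ^ 2 * ((1 + ε) * ‖v‖ ^ 2 + σ ^ 2) := by
    have hA : η * ((1 - s) * ‖v‖ ^ 2) ≤ η * (inner ℝ v (∫ ω, d ω ∂μ) : ℝ) :=
      mul_le_mul_of_nonneg_left hinner_low hη0
    have hB : β / 2 * η ^ 2 * (∫ ω, ‖d ω‖ ^ 2 ∂μ)
        ≤ β / 2 * η ^ 2 * (2 * (1 + ε) * ‖v‖ ^ 2 + 2 * σ ^ 2) :=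
      mul_le_mul_of_nonneg_left hdsq_bound hβη
    linarith [hIle]
  -- final arithmetic
  have hsqd : (2 * β * (1 + ε) * r) ^ 2 = 4 * β ^ 2 * (1 + ε) ^ 2 * (T:ℝ) := by
    rw [← hr2]; ring
  have hη2 : η ^ 2 = (1 - s) ^ 2 / (4 * β ^ 2 * (1 + ε) ^ 2 * (T:ℝ)) := by
    rw [hη, div_pow, hsqd]
  have hβ0 : β ≠ 0 := hβ.ne'
  have hT0' : (T:ℝ) ≠ 0 := hT0.ne'
  have h1e' : (1 + ε) ≠ 0 := h1e.ne'
  have hr0' : r ≠ 0 := hr0.ne'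
  have hGnn : (0:ℝ) ≤ ‖v‖ ^ 2 := sq_nonneg _
  have e1 : η * (1 - s) = (1 - s) ^ 2 / (2 * β * (1 + ε) * r) := by rw [hη]; ring
  have e2 : β * η ^ 2 * (1 + ε) = (1 - s) ^ 2 / (4 * β * (1 + ε) * (T:ℝ)) := by
    rw [hη2]; field_simp
  have e3 : β * η ^ 2 = (1 - s) ^ 2 / (4 * β * (1 + ε) ^ 2 * (T:ℝ)) := by
    rw [hη2]; field_simp
  have hd1' : (1 - s) ^ 2 / (4 * β * (1 + ε) * (T:ℝ)) ≤ (1 - s) ^ 2 / (4 * β * (1 + ε) * r) := by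
    apply div_le_div_of_nonneg_left (sq_nonneg _)
      (mul_pos (mul_pos (mul_pos (by norm_num) hβ) h1e) hr0)
    have h4 : 0 ≤ 4 * β * (1 + ε) := by positivity
    exact mul_le_mul_of_nonneg_left hrT (by nlinarith)
  have hhalf : (1 - s) ^ 2 / (2 * β * (1 + ε) * r) = 2 * ((1 - s) ^ 2 / (4 * β * (1 + ε) * r)) := by
    field_simp; ring
  have hcoef : -(η * (1 - s)) + β * η ^ 2 * (1 + ε) ≤ -((1 - s) ^ 2 / (4 * β * (1 + ε) * r)) := by
    rw [e1, e2]
    linarith [hd1', hhalf]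
  have h5 := mul_le_mul_of_nonneg_right hcoef hGnn
  have h4 : (β * η ^ 2) * σ ^ 2 = ((1 - s) ^ 2 / (4 * β * (1 + ε) ^ 2 * (T:ℝ))) * σ ^ 2 := by
    rw [e3]
  linarith [hmid, h5, h4.le, h4.ge]
end

section
/- Let F : ℝ^n → ℝ be differentiable with gradient ∇F that is Lipschitz continuous with constant β > 0 (β-smooth), and bounded below: F(w) ≥ F⋆ for all w ∈ ℝ^n. Let (Ω, 𝒜, P) be a probability space with a filtration (ℱ_t)_{t≥1}, let T ≥ 1 be an integer, ε ∈ [0,1), σ ≥ 0, and set the fixed learning rate η = (1 − √ε) / (2β(1 + ε)√T). Let w_1 ∈ ℝ^n be deterministic and, for t = 1, …, T, let g_t, e_t : Ω → ℝ^n be square-integrable ℱ_{t+1}-measurable random vectors and define w_{t+1} = w_t − η (g_t + e_t) (so w_t is ℱ_t-measurable). Assume that almost surely, for every t: E[g_t | ℱ_t] = ∇F(w_t), E[‖g_t − ∇F(w_t)‖² | ℱ_t] ≤ σ², and ‖e_t‖² ≤ ε ‖∇F(w_t)‖². Then (1/T) Σ_{t=1}^T E[ ‖∇F(w_t)‖²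 ] ≤ (1/√T) [ (4β(1 + ε)/(1 − √ε)²) ( F(w_1) − F⋆ ) + σ²/(1 + ε) ]. -/
open MeasureTheory InnerProductSpace
open scoped RealInnerProductSpace ENNReal

section FedqcsHelpers

lemma fedqcs_memLp_inner_integrable {Ω : Type*} {m0 : MeasurableSpace Ω} {μ : Measure Ω}
    {E : Type*} [NormedAddCommGroup E] [InnerProductSpace ℝ E]
    {f g : Ω → E} (hf : MemLp f 2 μ) (hg : MemLp g 2 μ) :
    Integrable (fun ω => ⟪f ω, g ω⟫_ℝ) μ := by
  have h1 : MemLp ((fun ω => ‖f ω‖) • fun ω => ‖g ω‖) 1 μ :=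
    hg.norm.smul hf.norm (hpqr := ⟨by simp [ENNReal.inv_two_add_inv_two]⟩)
  refine (memLp_one_iff_integrable.mp h1).mono'
    (hf.aestronglyMeasurable.inner hg.aestronglyMeasurable)
    (Filter.Eventually.of_forall fun ω => ?_)
  simpa [Real.norm_eq_abs] using abs_real_inner_le_norm (f ω) (g ω)

lemma fedqcs_memLp_sq_integrable {Ω : Type*} {m0 : MeasurableSpace Ω} {μ : Measure Ω}
    {E : Type*} [NormedAddCommGroup E] [InnerProductSpace ℝ E]
    {f : Ω → E} (hf : MemLp f 2 μ) :
    Integrable (fun ω => ‖f ω‖ ^ 2) μ := by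
  simpa [real_inner_self_eq_norm_sq] using fedqcs_memLp_inner_integrable hf hf

lemma fedqcs_real_mul_integrable {Ω : Type*} {m0 : MeasurableSpace Ω} {μ : Measure Ω}
    {f g : Ω → ℝ} (hf : MemLp f 2 μ) (hg : MemLp g 2 μ) :
    Integrable (fun ω => f ω * g ω) μ := by
  simpa [RCLike.inner_apply, conj_trivial, mul_comm] using fedqcs_memLp_inner_integrable hf hg

lemma fedqcs_descent_lemma {E : Type*} [NormedAddCommGroup E] [InnerProductSpace ℝ E]
    [CompleteSpace E]
    {F : E → ℝ} (hF : Differentiable ℝ F) {β : ℝ} (hβ : 0 ≤ β)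
    (hLip : ∀ x y, ‖gradient F x - gradient F y‖ ≤ β * ‖x - y‖) (x y : E) :
    F y ≤ F x + ⟪gradient F x, y - x⟫_ℝ + β / 2 * ‖y - x‖ ^ 2 := by
  set v := y - x with hv
  have hderiv : ∀ s : ℝ, HasDerivAt (fun s : ℝ => F (x + s • v))
      ⟪gradient F (x + s • v), v⟫_ℝ s := by
    intro s
    have h1 : HasFDerivAt F (toDual ℝ E (gradient F (x + s • v))) (x + s • v) :=
      hasGradientAt_iff_hasFDerivAt.mp (hF _).hasGradientAt
    have h2 : HasDerivAt (fun s : ℝ => x + s • v) v s := by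
      simpa using ((hasDerivAt_id s).smul_const v).const_add x
    have h3 := h1.comp_hasDerivAt s h2
    exact h3
  have hlipg : LipschitzWith (Real.toNNReal β) (gradient F) := by
    refine LipschitzWith.of_dist_le_mul fun a b => ?_
    rw [dist_eq_norm, dist_eq_norm]
    simpa [Real.coe_toNNReal β hβ] using hLip a b
  have hcont : Continuous fun s : ℝ => ⟪gradient F (x + s • v), v⟫_ℝ :=
    ((hlipg.continuous.comp (by continuity)).inner continuous_const)
  have hcont2 : Continuous fun s : ℝ => ⟪gradient F x, v⟫_ℝ + β * s * ‖v‖ ^ 2 := by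
    continuity
  have hFTC : F (x + (1:ℝ) • v) - F (x + (0:ℝ) • v)
      = ∫ s in (0:ℝ)..1, ⟪gradient F (x + s • v), v⟫_ℝ :=
    (intervalIntegral.integral_eq_sub_of_hasDerivAt (fun s _ => hderiv s)
      (hcont.intervalIntegrable 0 1)).symm
  have hmono : ∫ s in (0:ℝ)..1, ⟪gradient F (x + s • v), v⟫_ℝ
      ≤ ∫ s in (0:ℝ)..1, (⟪gradient F x, v⟫_ℝ + β * s * ‖v‖ ^ 2) := by
    refine intervalIntegral.integral_mono_on zero_le_one (hcont.intervalIntegrable 0 1)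
      (hcont2.intervalIntegrable 0 1) fun s hs => ?_
    have h1 : ⟪gradient F (x + s • v) - gradient F x, v⟫_ℝ ≤ β * s * ‖v‖ ^ 2 := by
      calc ⟪gradient F (x + s • v) - gradient F x, v⟫_ℝ
          ≤ ‖gradient F (x + s • v) - gradient F x‖ * ‖v‖ := real_inner_le_norm _ _
        _ ≤ (β * ‖(x + s • v) - x‖) * ‖v‖ :=
            mul_le_mul_of_nonneg_right (hLip _ _) (norm_nonneg v)
        _ = β * s * ‖v‖ ^ 2 := by
            simp [norm_smul, Real.norm_eq_abs, abs_of_nonneg hs.1]; ring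
    have h2 := inner_sub_left (𝕜 := ℝ) (gradient F (x + s • v)) (gradient F x) v
    linarith [h2 ▸ h1]
  have hval : ∫ s in (0:ℝ)..1, (⟪gradient F x, v⟫_ℝ + β * s * ‖v‖ ^ 2)
      = ⟪gradient F x, v⟫_ℝ + β / 2 * ‖v‖ ^ 2 := by
    have : (fun s : ℝ => ⟪gradient F x, v⟫_ℝ + β * s * ‖v‖ ^ 2)
        = fun s : ℝ => ⟪gradient F x, v⟫_ℝ + (β * ‖v‖ ^ 2) * s := by ext s; ring
    have h2int : IntervalIntegrable (fun s : ℝ => (β * ‖v‖ ^ 2) * s)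
        MeasureTheory.volume 0 1 := by
      apply Continuous.intervalIntegrable; continuity
    rw [this, intervalIntegral.integral_add intervalIntegrable_const h2int,
      intervalIntegral.integral_const_mul, integral_id]
    simp
    ring
  have h0 : F (x + (0:ℝ) • v) = F x := by simp
  have h1 : F (x + (1:ℝ) • v) = F y := by simp [hv]
  rw [h0, h1] at hFTC
  linarith [hmono, hval ▸ hmono]

lemma fedqcs_integral_inner_condexp {Ω : Type*} {m m0 : MeasurableSpace Ω} (hm : m ≤ m0)
    {μ : Measure Ω} [IsProbabilityMeasure μ] {n : ℕ}
    {X Y : Ω → EuclideanSpace ℝ (Fin n)}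
    (hXm : StronglyMeasurable[m] X) (hX : MemLp X 2 μ) (hY : MemLp Y 2 μ)
    (hc : μ[Y|m] =ᵐ[μ] X) :
    ∫ ω, ⟪X ω, Y ω⟫_ℝ ∂μ = ∫ ω, ⟪X ω, X ω⟫_ℝ ∂μ := by
  set c : Fin n → EuclideanSpace ℝ (Fin n) := fun i => EuclideanSpace.single i (1:ℝ) with hcdef
  have hXint : Integrable X μ := hX.integrable one_le_two
  have hYint : Integrable Y μ := hY.integrable one_le_two
  have hXi2 : ∀ i, MemLp (fun ω => ⟪c i, X ω⟫_ℝ) 2 μ := fun i => hX.const_inner (c i)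
  have hYi2 : ∀ i, MemLp (fun ω => ⟪c i, Y ω⟫_ℝ) 2 μ := fun i => hY.const_inner (c i)
  have hXim : ∀ i, StronglyMeasurable[m] fun ω => ⟪c i, X ω⟫_ℝ := fun i =>
    (Continuous.comp_stronglyMeasurable (continuous_const.inner continuous_id) hXm)
  have hcoord : ∀ i, (fun ω => ⟪c i, X ω⟫_ℝ) =ᵐ[μ] μ[fun ω => ⟪c i, Y ω⟫_ℝ|m] := by
    intro i
    refine ae_eq_condExp_of_forall_setIntegral_eq hm (hYint.const_inner (c i))
      (fun s _ _ => (hXint.const_inner (c i)).integrableOn)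
      (fun s hs _ => ?_) (StronglyMeasurable.aestronglyMeasurable (hXim i))
    have h1 : ∫ ω in s, Y ω ∂μ = ∫ ω in s, X ω ∂μ := by
      rw [← setIntegral_condExp hm hYint hs]
      exact setIntegral_congr_ae (hm s hs) (hc.mono fun ω hω _ => hω)
    rw [integral_inner hXint.integrableOn (c i), integral_inner hYint.integrableOn (c i), h1]
  have hintXY : ∀ i, Integrable (fun ω => ⟪c i, X ω⟫_ℝ * ⟪c i, Y ω⟫_ℝ) μ :=
    fun i => fedqcs_real_mul_integrable (hXi2 i) (hYi2 i)
  have hintXX : ∀ i, Integrable (fun ω => ⟪c i, X ω⟫_ℝ * ⟪c i, X ω⟫_ℝ) μ :=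
    fun i => fedqcs_real_mul_integrable (hXi2 i) (hXi2 i)
  have hprod : ∀ i, ∫ ω, ⟪c i, X ω⟫_ℝ * ⟪c i, Y ω⟫_ℝ ∂μ
      = ∫ ω, ⟪c i, X ω⟫_ℝ * ⟪c i, X ω⟫_ℝ ∂μ := by
    intro i
    have hYiInt : Integrable (fun ω => ⟪c i, Y ω⟫_ℝ) μ := hYint.const_inner (c i)
    have hmul := condExp_mul_of_stronglyMeasurable_left (m := m) (μ := μ) (hXim i)
      (hintXY i) hYiInt
    calc ∫ ω, ⟪c i, X ω⟫_ℝ * ⟪c i, Y ω⟫_ℝ ∂μ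
        = ∫ ω, (μ[(fun ω => ⟪c i, X ω⟫_ℝ) * (fun ω => ⟪c i, Y ω⟫_ℝ)|m]) ω ∂μ := by
          rw [integral_condExp hm]; rfl
      _ = ∫ ω, ((fun ω => ⟪c i, X ω⟫_ℝ) * (μ[fun ω => ⟪c i, Y ω⟫_ℝ|m])) ω ∂μ :=
          integral_congr_ae hmul
      _ = ∫ ω, ⟪c i, X ω⟫_ℝ * ⟪c i, X ω⟫_ℝ ∂μ := by
          refine integral_congr_ae ?_
          filter_upwards [hcoord i] with ω hω
          simp only [Pi.mul_apply]
          rw [← hω]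
  have hexp : ∀ (A B : Ω → EuclideanSpace ℝ (Fin n)) (ω : Ω),
      ⟪A ω, B ω⟫_ℝ = ∑ i, ⟪c i, A ω⟫_ℝ * ⟪c i, B ω⟫_ℝ := by
    intro A B ω
    simp [hcdef, EuclideanSpace.inner_single_left, PiLp.inner_apply, RCLike.inner_apply,
      conj_trivial, mul_comm]
  calc ∫ ω, ⟪X ω, Y ω⟫_ℝ ∂μ
      = ∫ ω, ∑ i, ⟪c i, X ω⟫_ℝ * ⟪c i, Y ω⟫_ℝ ∂μ := by simp_rw [hexp X Y]
    _ = ∑ i, ∫ ω, ⟪c i, X ω⟫_ℝ * ⟪c i, Y ω⟫_ℝ ∂μ :=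
        integral_finset_sum _ fun i _ => hintXY i
    _ = ∑ i, ∫ ω, ⟪c i, X ω⟫_ℝ * ⟪c i, X ω⟫_ℝ ∂μ := Finset.sum_congr rfl fun i _ => hprod i
    _ = ∫ ω, ∑ i, ⟪c i, X ω⟫_ℝ * ⟪c i, X ω⟫_ℝ ∂μ :=
        (integral_finset_sum _ fun i _ => hintXX i).symm
    _ = ∫ ω, ⟪X ω, X ω⟫_ℝ ∂μ := by simp_rw [hexp X X]

lemma fedqcs_final_algebra (β ε σ B s : ℝ) (hβ : 0 < β) (hp : (0:ℝ) < 1 + ε)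
    (hd : (0:ℝ) < 1 - Real.sqrt ε) (hs : 0 < s) :
    (B + s ^ 2 * (β * ((1 - Real.sqrt ε) / (2 * β * (1 + ε) * s)) ^ 2 * σ ^ 2))
        / ((((1 - Real.sqrt ε) / (2 * β * (1 + ε) * s)) * (1 - Real.sqrt ε) / 2) * s ^ 2)
      = (1 / s) * ((4 * β * (1 + ε) / (1 - Real.sqrt ε) ^ 2) * B + σ ^ 2 / (1 + ε)) := by
  have h1 : (1 - Real.sqrt ε) ≠ 0 := ne_of_gt hd
  have h2 : (1 + ε) ≠ 0 := ne_of_gt hp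
  field_simp
  ring

end FedqcsHelpers

set_option maxHeartbeats 2000000 in
/-- Theorem 2 of the paper: convergence rate of FedQCS run with SGD.
`F` is `β`-smooth and bounded below by `F⋆`; at each step `t = 1, …, T`,
`w_{t+1} = w_t - η (g_t + e_t)` with the fixed learning rate
`η = (1 - √ε)/(2β(1 + ε)√T)`, where, conditionally on `ℱ_t`, `g_t` is an unbiased
estimate of `∇F(w_t)` with conditional variance at most `σ²`, and the reconstruction
error satisfies `‖e_t‖² ≤ ε ‖∇F(w_t)‖²` almost surely.  Then
`(1/T) Σ_{t=1}^T E[‖∇F(w_t)‖²]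
  ≤ (1/√T) [ (4β(1+ε)/(1-√ε)²)(F(w_1) - F⋆) + σ²/(1+ε) ]`. -/
theorem fedqcs_sgd_convergence_rate
    (n : ℕ) (F : EuclideanSpace ℝ (Fin n) → ℝ)
    (hF : Differentiable ℝ F)
    (β : ℝ) (hβ : 0 < β)
    (hLip : ∀ x y, ‖gradient F x - gradient F y‖ ≤ β * ‖x - y‖)
    (Fstar : ℝ) (hFstar : ∀ x, Fstar ≤ F x)
    {Ω : Type*} {m0 : MeasurableSpace Ω} (μ : Measure Ω) [IsProbabilityMeasure μ]
    (ℱ : Filtration ℕ m0)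
    (T : ℕ) (hT : 1 ≤ T)
    (ε : ℝ) (hε0 : 0 ≤ ε) (hε1 : ε < 1)
    (σ : ℝ) (hσ : 0 ≤ σ)
    (η : ℝ) (hη : η = (1 - Real.sqrt ε) / (2 * β * (1 + ε) * Real.sqrt T))
    (w1 : EuclideanSpace ℝ (Fin n))
    (w g e : ℕ → Ω → EuclideanSpace ℝ (Fin n))
    (hw1 : ∀ ω, w 1 ω = w1)
    (hrec : ∀ t, 1 ≤ t → t ≤ T → ∀ ω, w (t + 1) ω = w t ω - η • (g t ω + e t ω))
    (hgmeas : ∀ t, 1 ≤ t → t ≤ T → StronglyMeasurable[ℱ (t + 1)] (g t))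
    (hemeas : ∀ t, 1 ≤ t → t ≤ T → StronglyMeasurable[ℱ (t + 1)] (e t))
    (hgL2 : ∀ t, 1 ≤ t → t ≤ T → MemLp (g t) 2 μ)
    (heL2 : ∀ t, 1 ≤ t → t ≤ T → MemLp (e t) 2 μ)
    (hgmean : ∀ t, 1 ≤ t → t ≤ T →
      μ[g t | ℱ t] =ᵐ[μ] fun ω => gradient F (w t ω))
    (hgvar : ∀ t, 1 ≤ t → t ≤ T →
      ∀ᵐ ω ∂μ,
        (μ[fun ω' => ‖g t ω' - gradient F (w t ω')‖ ^ 2 | ℱ t]) ω ≤ σ ^ 2)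
    (he : ∀ t, 1 ≤ t → t ≤ T →
      ∀ᵐ ω ∂μ, ‖e t ω‖ ^ 2 ≤ ε * ‖gradient F (w t ω)‖ ^ 2) :
    (1 / (T : ℝ)) * ∑ t ∈ Finset.Icc 1 T, ∫ ω, ‖gradient F (w t ω)‖ ^ 2 ∂μ ≤
      (1 / Real.sqrt T) *
        ((4 * β * (1 + ε) / (1 - Real.sqrt ε) ^ 2) * (F w1 - Fstar) +
          σ ^ 2 / (1 + ε)) := by
  -- basic scalar facts
  have hsT : (0:ℝ) < Real.sqrt T := Real.sqrt_pos.mpr (by exact_mod_cast hT)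
  have hsT1 : (1:ℝ) ≤ Real.sqrt T := by
    rw [show (1:ℝ) = Real.sqrt 1 by simp]
    exact Real.sqrt_le_sqrt (by exact_mod_cast hT)
  have hT2 : Real.sqrt T ^ 2 = (T:ℝ) := Real.sq_sqrt (by positivity)
  have hTpos : (0:ℝ) < T := by exact_mod_cast hT
  have hsε : Real.sqrt ε < 1 := by
    have := Real.sqrt_lt_sqrt hε0 hε1
    simpa using this
  have hsε0 : 0 ≤ Real.sqrt ε := Real.sqrt_nonneg ε
  have hd : (0:ℝ) < 1 - Real.sqrt ε := by linarith
  have hp : (0:ℝ) < 1 + ε := by linarith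
  have hη0 : 0 < η := by rw [hη]; positivity
  -- Lipschitz gradient
  have hlipg : LipschitzWith (Real.toNNReal β) (gradient F) := by
    refine LipschitzWith.of_dist_le_mul fun a b => ?_
    rw [dist_eq_norm, dist_eq_norm]
    simpa [Real.coe_toNNReal β hβ.le] using hLip a b
  -- measurability and integrability of the iterates
  have hwMeas : ∀ t, 1 ≤ t → t ≤ T + 1 →
      StronglyMeasurable[ℱ t] (w t) ∧ MemLp (w t) 2 μ := by
    intro t
    induction t with
    | zero => intro h; omega
    | succ s ih =>
      intro h1 h2
      rcases Nat.eq_zero_or_pos s with hs0 | hs1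
      · subst hs0
        have hconst : w 1 = fun _ => w1 := funext hw1
        rw [show (0:ℕ) + 1 = 1 from rfl, hconst]
        exact ⟨stronglyMeasurable_const, memLp_const _⟩
      · have hsT' : s ≤ T := by omega
        have ihs := ih hs1 (by omega)
        have hrecf : w (s+1) = fun ω => w s ω - η • (g s ω + e s ω) :=
          funext (hrec s hs1 hsT')
        rw [hrecf]
        constructor
        · exact (ihs.1.mono (ℱ.mono (Nat.le_succ s))).sub
            (((hgmeas s hs1 hsT').add (hemeas s hs1 hsT')).const_smul η)
        · exact ihs.2.sub (((hgL2 s hs1 hsT').add (heL2 s hs1 hsT')).const_smul η)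
  -- gradient of iterates
  have hGMeas : ∀ t, 1 ≤ t → t ≤ T →
      StronglyMeasurable[ℱ t] (fun ω => gradient F (w t ω)) := fun t h1 h2 =>
    hlipg.continuous.comp_stronglyMeasurable (hwMeas t h1 (by omega)).1
  have hGL2 : ∀ t, 1 ≤ t → t ≤ T → MemLp (fun ω => gradient F (w t ω)) 2 μ := by
    intro t h1 h2
    have hw2 := (hwMeas t h1 (by omega)).2
    have hb : ∀ ω, ‖gradient F (w t ω)‖
        ≤ (max ‖gradient F 0‖ β) * ‖(1:ℝ) + ‖w t ω‖‖ := by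
      intro ω
      have h0 : ‖gradient F (w t ω)‖ - ‖gradient F 0‖
          ≤ ‖gradient F (w t ω) - gradient F 0‖ := norm_sub_norm_le _ _
      have h1' : ‖gradient F (w t ω) - gradient F 0‖ ≤ β * ‖w t ω‖ := by
        simpa using hLip (w t ω) 0
      have h2' : ‖(1:ℝ) + ‖w t ω‖‖ = 1 + ‖w t ω‖ := by
        rw [Real.norm_eq_abs, abs_of_nonneg (by positivity)]
      rw [h2']
      have h3 : ‖gradient F 0‖ ≤ max ‖gradient F 0‖ β := le_max_left _ _
      have h4 : β ≤ max ‖gradient F 0‖ β := le_max_right _ _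
      nlinarith [norm_nonneg (w t ω)]
    refine MemLp.of_le_mul ((memLp_const (1:ℝ)).add hw2.norm)
      ((hlipg.continuous.comp_stronglyMeasurable
        ((hwMeas t h1 (by omega)).1.mono (ℱ.le t))).aestronglyMeasurable)
      (Filter.Eventually.of_forall hb)
  have hG2int : ∀ t, 1 ≤ t → t ≤ T →
      Integrable (fun ω => ‖gradient F (w t ω)‖ ^ 2) μ := fun t h1 h2 =>
    fedqcs_memLp_sq_integrable (hGL2 t h1 h2)
  -- integrability of F along the iterates
  have hFwInt : ∀ t, 1 ≤ t → t ≤ T + 1 → Integrable (fun ω => F (w t ω)) μ := by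
    intro t h1 h2
    have hw2 := (hwMeas t h1 h2).2
    have hbd : Integrable (fun ω =>
        |Fstar| + |F 0| + ‖gradient F 0‖ * ‖w t ω‖ + β/2 * ‖w t ω‖ ^ 2) μ := by
      refine (((integrable_const _).add
        ((hw2.norm.integrable one_le_two).const_mul _)).add
        ((fedqcs_memLp_sq_integrable hw2).const_mul _))
    refine hbd.mono'
      ((hF.continuous.comp_stronglyMeasurable
        ((hwMeas t h1 h2).1.mono (ℱ.le t))).aestronglyMeasurable)
      (Filter.Eventually.of_forall fun ω => ?_)
    have hub : F (w t ω) ≤ F 0 + ‖gradient F 0‖ * ‖w t ω‖ + β/2 * ‖w t ω‖ ^ 2 := by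
      have hdl := fedqcs_descent_lemma hF hβ.le hLip 0 (w t ω)
      have hin : ⟪gradient F 0, w t ω⟫_ℝ ≤ ‖gradient F 0‖ * ‖w t ω‖ :=
        real_inner_le_norm (gradient F 0) (w t ω)
      simp only [sub_zero] at hdl
      linarith
    have hlb := hFstar (w t ω)
    rw [Real.norm_eq_abs, abs_le]
    constructor
    · have h1'' : 0 ≤ ‖gradient F 0‖ * ‖w t ω‖ := mul_nonneg (norm_nonneg _) (norm_nonneg _)
      have h2'' : 0 ≤ β/2 * ‖w t ω‖ ^ 2 := by positivity
      have h3'' : -|Fstar| ≤ Fstar := neg_abs_le Fstar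
      have h4'' : (0:ℝ) ≤ |F 0| := abs_nonneg _
      linarith
    · have h3'' : F 0 ≤ |F 0| := le_abs_self _
      have h4'' : (0:ℝ) ≤ |Fstar| := abs_nonneg _
      linarith
  -- the one-step descent inequality in expectation
  have step : ∀ t, 1 ≤ t → t ≤ T →
      ∫ ω, F (w (t+1) ω) ∂μ ≤ ∫ ω, F (w t ω) ∂μ
        - (η * (1 - Real.sqrt ε) / 2) * ∫ ω, ‖gradient F (w t ω)‖ ^ 2 ∂μ
        + β * η ^ 2 * σ ^ 2 := by
    intro t h1 h2
    have hXm : StronglyMeasurable[ℱ t] (fun ω => gradient F (w t ω)) := hGMeas t h1 h2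
    have hX2 : MemLp (fun ω => gradient F (w t ω)) 2 μ := hGL2 t h1 h2
    have hg2 := hgL2 t h1 h2
    have he2 := heL2 t h1 h2
    have hge2 : MemLp (fun ω => g t ω + e t ω) 2 μ := hg2.add he2
    have hD2 : MemLp (fun ω => g t ω - gradient F (w t ω)) 2 μ := hg2.sub hX2
    have hIG : Integrable (fun ω => ‖gradient F (w t ω)‖ ^ 2) μ := hG2int t h1 h2
    have hI1 : Integrable (fun ω => ⟪gradient F (w t ω), g t ω⟫_ℝ) μ :=
      fedqcs_memLp_inner_integrable hX2 hg2
    have hI2 : Integrable (fun ω => ⟪gradient F (w t ω), e t ω⟫_ℝ) μ :=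
      fedqcs_memLp_inner_integrable hX2 he2
    have hI3 : Integrable (fun ω => ‖g t ω + e t ω‖ ^ 2) μ :=
      fedqcs_memLp_sq_integrable hge2
    have hID : Integrable (fun ω => ‖g t ω - gradient F (w t ω)‖ ^ 2) μ :=
      fedqcs_memLp_sq_integrable hD2
    have hIe : Integrable (fun ω => ‖e t ω‖ ^ 2) μ := fedqcs_memLp_sq_integrable he2
    have hIg : Integrable (fun ω => ‖g t ω‖ ^ 2) μ := fedqcs_memLp_sq_integrable hg2
    -- pointwise descent
    have hpt : ∀ ω, F (w (t+1) ω) ≤ F (w t ω)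
        - η * ⟪gradient F (w t ω), g t ω⟫_ℝ - η * ⟪gradient F (w t ω), e t ω⟫_ℝ
        + β/2 * η^2 * ‖g t ω + e t ω‖ ^ 2 := by
      intro ω
      have hdl := fedqcs_descent_lemma hF hβ.le hLip (w t ω) (w (t+1) ω)
      rw [hrec t h1 h2 ω] at hdl
      have hdiff : w t ω - η • (g t ω + e t ω) - w t ω = -(η • (g t ω + e t ω)) := by
        abel
      rw [hdiff] at hdl
      have hin : ⟪gradient F (w t ω), -(η • (g t ω + e t ω))⟫_ℝ
          = -(η * (⟪gradient F (w t ω), g t ω⟫_ℝ + ⟪gradient F (w t ω), e t ω⟫_ℝ)) := by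
        rw [inner_neg_right, inner_smul_right, inner_add_right]
      have hnr : ‖-(η • (g t ω + e t ω))‖ ^ 2 = η ^ 2 * ‖g t ω + e t ω‖ ^ 2 := by
        rw [norm_neg, norm_smul, mul_pow, Real.norm_eq_abs, sq_abs]
      rw [hin, hnr] at hdl
      rw [hrec t h1 h2 ω]
      linarith
    -- integrate the pointwise bound
    have hRHSint : Integrable (fun ω => F (w t ω)
        - η * ⟪gradient F (w t ω), g t ω⟫_ℝ - η * ⟪gradient F (w t ω), e t ω⟫_ℝ
        + β/2 * η^2 * ‖g t ω + e t ω‖ ^ 2) μ :=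
      (((hFwInt t h1 (by omega)).sub (hI1.const_mul η)).sub (hI2.const_mul η)).add
        (hI3.const_mul _)
    have hInt1 : ∫ ω, F (w (t+1) ω) ∂μ ≤ ∫ ω, (F (w t ω)
        - η * ⟪gradient F (w t ω), g t ω⟫_ℝ - η * ⟪gradient F (w t ω), e t ω⟫_ℝ
        + β/2 * η^2 * ‖g t ω + e t ω‖ ^ 2) ∂μ :=
      integral_mono (hFwInt (t+1) (by omega) (by omega)) hRHSint hpt
    have hsplit : ∫ ω, (F (w t ω)
        - η * ⟪gradient F (w t ω), g t ω⟫_ℝ - η * ⟪gradient F (w t ω), e t ω⟫_ℝ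
        + β/2 * η^2 * ‖g t ω + e t ω‖ ^ 2) ∂μ
        = ∫ ω, F (w t ω) ∂μ
          - η * ∫ ω, ⟪gradient F (w t ω), g t ω⟫_ℝ ∂μ
          - η * ∫ ω, ⟪gradient F (w t ω), e t ω⟫_ℝ ∂μ
          + β/2 * η^2 * ∫ ω, ‖g t ω + e t ω‖ ^ 2 ∂μ := by
      have hIa : Integrable (fun ω => F (w t ω)
          - η * ⟪gradient F (w t ω), g t ω⟫_ℝ - η * ⟪gradient F (w t ω), e t ω⟫_ℝ) μ :=
        ((hFwInt t h1 (by omega)).sub (hI1.const_mul η)).sub (hI2.const_mul η)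
      have hIb : Integrable (fun ω => β/2 * η^2 * ‖g t ω + e t ω‖ ^ 2) μ :=
        hI3.const_mul _
      have hIc : Integrable (fun ω => F (w t ω)
          - η * ⟪gradient F (w t ω), g t ω⟫_ℝ) μ :=
        (hFwInt t h1 (by omega)).sub (hI1.const_mul η)
      have hId' : Integrable (fun ω => η * ⟪gradient F (w t ω), e t ω⟫_ℝ) μ :=
        hI2.const_mul η
      have hIe' : Integrable (fun ω => η * ⟪gradient F (w t ω), g t ω⟫_ℝ) μ :=
        hI1.const_mul η
      rw [integral_add hIa hIb, integral_sub hIc hId',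
        integral_sub (hFwInt t h1 (by omega)) hIe',
        integral_const_mul, integral_const_mul, integral_const_mul]
    -- the unbiasedness identity
    have hI1eq : ∫ ω, ⟪gradient F (w t ω), g t ω⟫_ℝ ∂μ
        = ∫ ω, ‖gradient F (w t ω)‖ ^ 2 ∂μ := by
      have hcr := fedqcs_integral_inner_condexp (ℱ.le t) hXm hX2 hg2 (hgmean t h1 h2)
      calc ∫ ω, ⟪gradient F (w t ω), g t ω⟫_ℝ ∂μ
          = ∫ ω, ⟪gradient F (w t ω), gradient F (w t ω)⟫_ℝ ∂μ := hcr
        _ = ∫ ω, ‖gradient F (w t ω)‖ ^ 2 ∂μ := by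
            simp_rw [real_inner_self_eq_norm_sq]
    -- the error inner product bound
    have heae := he t h1 h2
    have hI2ge : -(Real.sqrt ε * ∫ ω, ‖gradient F (w t ω)‖ ^ 2 ∂μ)
        ≤ ∫ ω, ⟪gradient F (w t ω), e t ω⟫_ℝ ∂μ := by
      rw [← integral_const_mul, ← integral_neg]
      refine integral_mono_ae ((hIG.const_mul _).neg) hI2 ?_
      filter_upwards [heae] with ω hω
      have h1' : ‖e t ω‖ ≤ Real.sqrt ε * ‖gradient F (w t ω)‖ := by
        calc ‖e t ω‖ = Real.sqrt (‖e t ω‖ ^ 2) := (Real.sqrt_sq (norm_nonneg _)).symm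
          _ ≤ Real.sqrt (ε * ‖gradient F (w t ω)‖ ^ 2) := Real.sqrt_le_sqrt hω
          _ = Real.sqrt ε * ‖gradient F (w t ω)‖ := by
              rw [Real.sqrt_mul hε0, Real.sqrt_sq (norm_nonneg _)]
      have h2' : -(‖gradient F (w t ω)‖ * ‖e t ω‖)
          ≤ ⟪gradient F (w t ω), e t ω⟫_ℝ := by
        have := abs_real_inner_le_norm (gradient F (w t ω)) (e t ω)
        have := neg_abs_le ⟪gradient F (w t ω), e t ω⟫_ℝ
        linarith
      nlinarith [norm_nonneg (gradient F (w t ω)), norm_nonneg (e t ω)]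
    -- variance bound
    have hvar : ∫ ω, ‖g t ω - gradient F (w t ω)‖ ^ 2 ∂μ ≤ σ ^ 2 := by
      rw [← integral_condExp (ℱ.le t) (f := fun ω' => ‖g t ω' - gradient F (w t ω')‖ ^ 2)]
      calc ∫ ω, (μ[fun ω' => ‖g t ω' - gradient F (w t ω')‖ ^ 2|ℱ t]) ω ∂μ
          ≤ ∫ _, σ ^ 2 ∂μ :=
            integral_mono_ae integrable_condExp (integrable_const _) (hgvar t h1 h2)
        _ = σ ^ 2 := by simp
    -- second moment of g
    have hgnorm : ∫ ω, ‖g t ω‖ ^ 2 ∂μ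
        ≤ σ ^ 2 + ∫ ω, ‖gradient F (w t ω)‖ ^ 2 ∂μ := by
      have hptg : ∀ ω, ‖g t ω‖ ^ 2 = ‖g t ω - gradient F (w t ω)‖ ^ 2
          + 2 * ⟪gradient F (w t ω), g t ω⟫_ℝ - ‖gradient F (w t ω)‖ ^ 2 := by
        intro ω
        have hns := norm_sub_sq_real (g t ω) (gradient F (w t ω))
        have hsym := real_inner_comm (gradient F (w t ω)) (g t ω)
        linarith
      have : ∫ ω, ‖g t ω‖ ^ 2 ∂μ
          = ∫ ω, ‖g t ω - gradient F (w t ω)‖ ^ 2 ∂μ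
            + 2 * ∫ ω, ⟪gradient F (w t ω), g t ω⟫_ℝ ∂μ
            - ∫ ω, ‖gradient F (w t ω)‖ ^ 2 ∂μ := by
        simp_rw [hptg]
        have hIa : Integrable (fun ω => ‖g t ω - gradient F (w t ω)‖ ^ 2
            + 2 * ⟪gradient F (w t ω), g t ω⟫_ℝ) μ := hID.add (hI1.const_mul 2)
        have hIb : Integrable (fun ω => 2 * ⟪gradient F (w t ω), g t ω⟫_ℝ) μ :=
          hI1.const_mul 2
        rw [integral_sub hIa hIG, integral_add hID hIb, integral_const_mul]
      rw [this, hI1eq]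
      linarith
    -- second moment of e
    have henorm : ∫ ω, ‖e t ω‖ ^ 2 ∂μ ≤ ε * ∫ ω, ‖gradient F (w t ω)‖ ^ 2 ∂μ := by
      rw [← integral_const_mul]
      exact integral_mono_ae hIe (hIG.const_mul ε) heae
    -- bound on the update second moment
    have hI3le : ∫ ω, ‖g t ω + e t ω‖ ^ 2 ∂μ
        ≤ 2 * σ ^ 2 + 2 * (1 + ε) * ∫ ω, ‖gradient F (w t ω)‖ ^ 2 ∂μ := by
      have hpt3 : ∀ ω, ‖g t ω + e t ω‖ ^ 2 ≤ 2 * ‖g t ω‖ ^ 2 + 2 * ‖e t ω‖ ^ 2 := by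
        intro ω
        have h0 := norm_add_le (g t ω) (e t ω)
        have h2 : ‖g t ω + e t ω‖ ^ 2 ≤ (‖g t ω‖ + ‖e t ω‖) ^ 2 :=
          pow_le_pow_left₀ (norm_nonneg _) h0 2
        nlinarith [sq_nonneg (‖g t ω‖ - ‖e t ω‖)]
      have hstep1 : ∫ ω, ‖g t ω + e t ω‖ ^ 2 ∂μ
          ≤ ∫ ω, (2 * ‖g t ω‖ ^ 2 + 2 * ‖e t ω‖ ^ 2) ∂μ :=
        integral_mono hI3 ((hIg.const_mul 2).add (hIe.const_mul 2)) hpt3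
      have hstep2 : ∫ ω, (2 * ‖g t ω‖ ^ 2 + 2 * ‖e t ω‖ ^ 2) ∂μ
          = 2 * ∫ ω, ‖g t ω‖ ^ 2 ∂μ + 2 * ∫ ω, ‖e t ω‖ ^ 2 ∂μ := by
        rw [integral_add (hIg.const_mul 2) (hIe.const_mul 2), integral_const_mul,
          integral_const_mul]
      nlinarith [hgnorm, henorm]
    -- combine
    have hGnn : 0 ≤ ∫ ω, ‖gradient F (w t ω)‖ ^ 2 ∂μ :=
      integral_nonneg fun ω => sq_nonneg _
    have hβηε : β * η * (1 + ε) = (1 - Real.sqrt ε) / (2 * Real.sqrt T) := by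
      rw [hη]; field_simp
    have hkey : β * η ^ 2 * (1 + ε) ≤ η * (1 - Real.sqrt ε) / 2 := by
      have h1' : β * η * (1 + ε) ≤ (1 - Real.sqrt ε) / 2 := by
        rw [hβηε]
        rw [div_le_div_iff₀ (by positivity) (by norm_num)]
        nlinarith
      nlinarith [hη0.le]
    have e1 : -(η * (Real.sqrt ε * ∫ ω, ‖gradient F (w t ω)‖ ^ 2 ∂μ))
        ≤ η * ∫ ω, ⟪gradient F (w t ω), e t ω⟫_ℝ ∂μ := by
      have := mul_le_mul_of_nonneg_left hI2ge hη0.le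
      nlinarith [this]
    have e2 : (β/2 * η^2) * ∫ ω, ‖g t ω + e t ω‖ ^ 2 ∂μ
        ≤ (β/2 * η^2) * (2 * σ ^ 2 + 2 * (1 + ε) * ∫ ω, ‖gradient F (w t ω)‖ ^ 2 ∂μ) :=
      mul_le_mul_of_nonneg_left hI3le (by positivity)
    have e3 : (β * η ^ 2 * (1 + ε)) * ∫ ω, ‖gradient F (w t ω)‖ ^ 2 ∂μ
        ≤ (η * (1 - Real.sqrt ε) / 2) * ∫ ω, ‖gradient F (w t ω)‖ ^ 2 ∂μ :=
      mul_le_mul_of_nonneg_right hkey hGnn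
    rw [hsplit, hI1eq] at hInt1
    nlinarith [hInt1, e1, e2, e3]
  -- telescoping
  set A : ℕ → ℝ := fun t => ∫ ω, F (w t ω) ∂μ with hA
  set G : ℕ → ℝ := fun t => ∫ ω, ‖gradient F (w t ω)‖ ^ 2 ∂μ with hG
  have htel : (η * (1 - Real.sqrt ε) / 2) * ∑ t ∈ Finset.Icc 1 T, G t
      ≤ (F w1 - Fstar) + (T:ℝ) * (β * η ^ 2 * σ ^ 2) := by
    have hstep' : ∀ t ∈ Finset.Icc 1 T,
        (η * (1 - Real.sqrt ε) / 2) * G t ≤ (A t - A (t+1)) + β * η ^ 2 * σ ^ 2 := by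
      intro t ht
      rw [Finset.mem_Icc] at ht
      have := step t ht.1 ht.2
      simp only [hA, hG]
      linarith
    have hsum1 : (η * (1 - Real.sqrt ε) / 2) * ∑ t ∈ Finset.Icc 1 T, G t
        ≤ ∑ t ∈ Finset.Icc 1 T, ((A t - A (t+1)) + β * η ^ 2 * σ ^ 2) := by
      rw [Finset.mul_sum]
      exact Finset.sum_le_sum hstep'
    have hsum2 : ∑ t ∈ Finset.Icc 1 T, ((A t - A (t+1)) + β * η ^ 2 * σ ^ 2)
        = (A 1 - A (T+1)) + (T:ℝ) * (β * η ^ 2 * σ ^ 2) := by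
      rw [Finset.sum_add_distrib, Finset.sum_const, Nat.card_Icc]
      congr 1
      · rw [← Finset.Ico_add_one_right_eq_Icc, Finset.sum_Ico_eq_sum_range]
        have h := Finset.sum_range_sub' (fun i => A (1 + i)) T
        simpa [Nat.add_comm 1 T, Nat.add_assoc] using h
      · rw [Nat.add_sub_cancel, nsmul_eq_mul]
    have hA1 : A 1 = F w1 := by
      simp only [hA]
      simp_rw [hw1]
      simp
    have hAT : Fstar ≤ A (T+1) := by
      have h1 : (Fstar:ℝ) = ∫ _, (Fstar:ℝ) ∂μ := by simp
      rw [hA, h1]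
      exact integral_mono (integrable_const _) (hFwInt (T+1) (by omega) le_rfl)
        fun ω => hFstar _
    calc (η * (1 - Real.sqrt ε) / 2) * ∑ t ∈ Finset.Icc 1 T, G t
        ≤ (A 1 - A (T+1)) + (T:ℝ) * (β * η ^ 2 * σ ^ 2) := by rw [← hsum2]; exact hsum1
      _ ≤ (F w1 - Fstar) + (T:ℝ) * (β * η ^ 2 * σ ^ 2) := by
          rw [hA1]; linarith
  -- final algebra
  have hc : (0:ℝ) < η * (1 - Real.sqrt ε) / 2 := by positivity
  have hB : (0:ℝ) ≤ F w1 - Fstar := by linarith [hFstar w1]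
  have hEq : ((F w1 - Fstar) + (T:ℝ) * (β * η ^ 2 * σ ^ 2))
        / ((η * (1 - Real.sqrt ε) / 2) * T)
      = (1 / Real.sqrt T) *
        ((4 * β * (1 + ε) / (1 - Real.sqrt ε) ^ 2) * (F w1 - Fstar) + σ ^ 2 / (1 + ε)) := by
    rw [hη, ← hT2, Real.sqrt_sq (Real.sqrt_nonneg _)]
    exact fedqcs_final_algebra β ε σ (F w1 - Fstar) (Real.sqrt T) hβ hp hd hsT
  have hSig : ∑ t ∈ Finset.Icc 1 T, G t
      ≤ ((F w1 - Fstar) + (T:ℝ) * (β * η ^ 2 * σ ^ 2)) / (η * (1 - Real.sqrt ε) / 2) := by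
    rw [le_div_iff₀ hc]
    linarith [htel]
  calc (1 / (T:ℝ)) * ∑ t ∈ Finset.Icc 1 T, G t
      = (∑ t ∈ Finset.Icc 1 T, G t) / T := by ring
    _ ≤ (((F w1 - Fstar) + (T:ℝ) * (β * η ^ 2 * σ ^ 2))
          / (η * (1 - Real.sqrt ε) / 2)) / T := by
        exact (div_le_div_iff_of_pos_right hTpos).mpr hSig
    _ = ((F w1 - Fstar) + (T:ℝ) * (β * η ^ 2 * σ ^ 2))
          / ((η * (1 - Real.sqrt ε) / 2) * T) := by rw [div_div]
    _ = (1 / Real.sqrt T) *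
        ((4 * β * (1 + ε) / (1 - Real.sqrt ε) ^ 2) * (F w1 - Fstar) + σ ^ 2 / (1 + ε)) := hEq
end
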